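/- arXiv:1809.06814 — 8 statements merged into one kernel-verified Lean document; each statement's English description precedes it below -/
import Mathlib

section
/- Let F be a non-meager P-filter on ω extending the Fréchet filter. Then F, viewed as a topological subspace of the Cantor space 2^ω, is countable dense homogeneous. -/
open Set

/-- A point of the Cantor space `α → Bool`, viewed as a subset of `α`
(the identification of `2^ω` with `𝒫(ω)` via characteristic functions). -/
def toSet {α : Type*} (x : α → Bool) : Set α := {a | x a = true}

/-- The copy of a family `F ⊆ 𝒫(α)` inside the Cantor space `α → Bool`. -/
def cantorCopy {α : Type*} (F : Set (Set α)) : Set (α → Bool) := toSet ⁻¹' F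

/-- `F` is a filter on `α`: contains the whole set, not `∅`, closed under
finite intersections and supersets. -/
def IsFilterOn {α : Type*} (F : Set (Set α)) : Prop :=
  Set.univ ∈ F ∧ ∅ ∉ F ∧ (∀ A B : Set α, A ∈ F → B ∈ F → A ∩ B ∈ F) ∧
    ∀ A B : Set α, A ∈ F → A ⊆ B → B ∈ F

/-- `F` extends the Fréchet filter: every cofinite set belongs to `F`. -/
def ExtendsFrechet {α : Type*} (F : Set (Set α)) : Prop :=
  ∀ A : Set α, Aᶜ.Finite → A ∈ F

/-- `F` is a P-filter: every countable subfamily has a pseudo-intersection in `F`. -/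
def IsPFilterOn {α : Type*} (F : Set (Set α)) : Prop :=
  ∀ X : ℕ → Set α, (∀ n, X n ∈ F) → ∃ Y ∈ F, ∀ n, (Y \ X n).Finite

/-- `F` is non-meager as a subset of the Cantor space `α → Bool`. -/
def NonMeagerFamily {α : Type*} (F : Set (Set α)) : Prop :=
  ¬ IsMeagre (cantorCopy F)

/-- `I` is an ideal on `α`: contains `∅`, not the whole set, closed under
finite unions and subsets. -/
def IsIdealOn {α : Type*} (I : Set (Set α)) : Prop :=
  ∅ ∈ I ∧ Set.univ ∉ I ∧ (∀ A B : Set α, A ∈ I → B ∈ I → A ∪ B ∈ I) ∧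
    ∀ A B : Set α, A ∈ I → B ⊆ A → B ∈ I

/-- `I` contains all finite sets. -/
def ContainsFinites {α : Type*} (I : Set (Set α)) : Prop :=
  ∀ A : Set α, A.Finite → A ∈ I

/-- `I` is a P-ideal: every countable subfamily has a member of `I`
almost containing each of them. -/
def IsPIdealOn {α : Type*} (I : Set (Set α)) : Prop :=
  ∀ X : ℕ → Set α, (∀ n, X n ∈ I) → ∃ Y ∈ I, ∀ n, (X n \ Y).Finite

/-- A topological space is countable dense homogeneous. -/
def CDH (X : Type*) [TopologicalSpace X] : Prop :=
  ∀ D E : Set X, D.Countable → Dense D → E.Countable → Dense E →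
    ∃ h : X ≃ₜ X, h '' D = E

/-- `D` is a (set-theoretic) subfamily of `F` that is dense in `F` with respect to
the subspace topology `F` inherits from the Cantor space. -/
def DenseIn {α : Type*} (D F : Set (Set α)) : Prop :=
  D ⊆ F ∧ cantorCopy F ⊆ closure (cantorCopy D)


/-!
Enumerate the two countable dense sets as `dᵢ` and `eᵢ`. As `F` is a P-filter, some `C ∈ F` is
almost contained in every `dᵢ ∩ eᵢ`, and as `F` is non-meager, `C` can be shrunk inside `F` so that
it misses infinitely many arbitrarily long intervals. A back-and-forth argument then produces a
homeomorphism `h` of `2^ω`, the limit of permutations of finitely many coordinates, that maps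
`{dᵢ}` onto `{eᵢ}` and changes no coordinate in `C`: a newly paired point is sent to an `eₘ` that
agrees with it below a gap of `C`, and both contain `C` beyond it. Then `h x ∩ C = x ∩ C`, so `h`
and `h⁻¹` preserve `F`.
-/

open Filter Topology PiNat

namespace PFilterCDH

variable {β : Type*}

theorem eventually_eqOn_Iio_imp_eq (x y : ℕ → β) : ∀ᶠ t in atTop, EqOn x y (Iio t) → x = y := by
  by_cases hxy : x = y
  · exact .of_forall fun _ _ => hxy
  · obtain ⟨n, hn⟩ := Function.ne_iff.1 hxy
    filter_upwards [eventually_gt_atTop n] with t ht h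
    exact absurd (h ht) hn

section Topology

variable [TopologicalSpace β] [DiscreteTopology β]

theorem exists_cylinder_subset_of_mem_nhds {x : ℕ → β} {U : Set (ℕ → β)} (hU : U ∈ 𝓝 x) :
    ∃ n, cylinder x n ⊆ U := by
  obtain ⟨_, ⟨y, n, rfl⟩, hx, hsub⟩ := (isTopologicalBasis_cylinders fun _ => β).mem_nhds_iff.1 hU
  exact ⟨n, (mem_cylinder_iff_eq.1 hx).symm ▸ hsub⟩

theorem continuous_of_eqOn_Iio {γ : Type*} [TopologicalSpace γ] {f : (ℕ → β) → γ} (t : ℕ)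
    (hf : ∀ x y, EqOn x y (Iio t) → f x = f y) : Continuous f := by
  refine (IsLocallyConstant.iff_eventually_eq f |>.2 fun x => ?_).continuous
  filter_upwards [(isOpen_cylinder _ x t).mem_nhds (self_mem_cylinder x t)] with y hy
  exact hf y x hy

end Topology

structure ActsBelow (t : ℕ) (P : (ℕ → β) ≃ (ℕ → β)) : Prop where
  apply_of_le : ∀ x n, t ≤ n → P x n = x n
  eqOn_of_eqOn : ∀ x y, EqOn x y (Iio t) → EqOn (P x) (P y) (Iio t)

namespace ActsBelow

variable {t t' : ℕ} {P Q : (ℕ → β) ≃ (ℕ → β)}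

theorem symm (hP : ActsBelow t P) : ActsBelow t P.symm where
  apply_of_le x n hn := by
    conv_rhs => rw [← P.apply_symm_apply x]
    exact (hP.apply_of_le _ n hn).symm
  eqOn_of_eqOn x y hxy := by
    classical
    set a := P.symm x
    set b := P.symm y
    -- `b'` has the pattern of `a` below `t` and agrees with `b` from `t` on, so `P b' = P b`.
    set b' := (Iio t).piecewise a b
    have hb' : P b' = P b := by
      funext n
      rcases lt_or_ge n t with hn | hn
      · have := hP.eqOn_of_eqOn b' a (piecewise_eqOn _ _ _) hn
        rw [this, P.apply_symm_apply, hxy hn, ← P.apply_symm_apply y]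
      · rw [hP.apply_of_le _ n hn, hP.apply_of_le _ n hn]
        exact piecewise_eq_of_notMem _ _ _ (not_lt.2 hn)
    intro n hn
    rw [← P.injective hb']
    exact (piecewise_eqOn _ _ _ hn).symm

theorem mono (hP : ActsBelow t P) (ht : t ≤ t') : ActsBelow t' P where
  apply_of_le x n hn := hP.apply_of_le x n (ht.trans hn)
  eqOn_of_eqOn x y hxy n hn := by
    rcases lt_or_ge n t with hnt | hnt
    · exact hP.eqOn_of_eqOn x y (hxy.mono (Iio_subset_Iio ht)) hnt
    · rw [hP.apply_of_le x n hnt, hP.apply_of_le y n hnt]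
      exact hxy hn

theorem trans (hP : ActsBelow t P) (hQ : ActsBelow t Q) : ActsBelow t (P.trans Q) where
  apply_of_le x n hn := (hQ.apply_of_le _ n hn).trans (hP.apply_of_le x n hn)
  eqOn_of_eqOn x y hxy := hQ.eqOn_of_eqOn _ _ (hP.eqOn_of_eqOn x y hxy)

theorem eqOn_symm (hP : ActsBelow t P) (hQP : ∀ x, EqOn (Q x) (P x) (Iio t)) (y : ℕ → β) :
    EqOn (Q.symm y) (P.symm y) (Iio t) := by
  have h := hP.symm.eqOn_of_eqOn _ _ (hQP (Q.symm y)).symm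
  rwa [Equiv.symm_apply_apply, Equiv.apply_symm_apply] at h

end ActsBelow

section Limit

variable {P : ℕ → (ℕ → β) ≃ (ℕ → β)} {t : ℕ → ℕ}

/-- Coordinate `n` of the limit is read off at stage `n + 1`, whose cut exceeds `n`. -/
def seqLimit (P : ℕ → (ℕ → β) ≃ (ℕ → β)) (x : ℕ → β) : ℕ → β := fun n => P (n + 1) x n

theorem eqOn_seqLimit (ht : StrictMono t)
    (hcoh : ∀ n x, EqOn (P (n + 1) x) (P n x) (Iio (t n))) (N : ℕ) (x : ℕ → β) :
    EqOn (seqLimit P x) (P N x) (Iio (t N)) := by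
  have hcoh' : ∀ n m, n ≤ m → EqOn (P m x) (P n x) (Iio (t n)) := by
    intro n m hnm
    induction m, hnm using Nat.le_induction with
    | base => exact eqOn_refl _ _
    | succ m hnm ih => exact ((hcoh m x).mono (Iio_subset_Iio (ht.monotone hnm))).trans ih
  intro n hn
  rcases le_total (n + 1) N with h | h
  · exact (hcoh' (n + 1) N h (ht.id_le _)).symm
  · exact hcoh' N (n + 1) h hn

theorem seqLimit_symm_seqLimit (ht : StrictMono t) (hP : ∀ n, ActsBelow (t n) (P n))
    (hcoh : ∀ n x, EqOn (P (n + 1) x) (P n x) (Iio (t n))) (x : ℕ → β) :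
    seqLimit (fun n => (P n).symm) (seqLimit P x) = x := by
  funext n
  have h := (hP (n + 1)).symm.eqOn_of_eqOn _ _ (eqOn_seqLimit ht hcoh (n + 1) x)
    (ht.id_le _)
  rwa [Equiv.symm_apply_apply] at h

variable [TopologicalSpace β] [DiscreteTopology β]

theorem continuous_seqLimit (ht : StrictMono t) (hP : ∀ n, ActsBelow (t n) (P n)) :
    Continuous (seqLimit P) :=
  continuous_pi fun n => continuous_of_eqOn_Iio (t (n + 1)) fun x y hxy =>
    (hP (n + 1)).eqOn_of_eqOn x y hxy (ht.id_le _)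

theorem exists_homeomorph_eqOn_Iio (ht : StrictMono t) (hP : ∀ n, ActsBelow (t n) (P n))
    (hcoh : ∀ n x, EqOn (P (n + 1) x) (P n x) (Iio (t n))) :
    ∃ h : (ℕ → β) ≃ₜ (ℕ → β), ∀ n x, EqOn (h x) (P n x) (Iio (t n)) := by
  have hcoh_symm n y : EqOn ((P (n + 1)).symm y) ((P n).symm y) (Iio (t n)) :=
    (hP n).eqOn_symm (hcoh n) y
  exact ⟨{ toFun := seqLimit P
           invFun := seqLimit fun n => (P n).symm
           left_inv := seqLimit_symm_seqLimit ht hP hcoh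
           right_inv := seqLimit_symm_seqLimit (P := fun n => (P n).symm) ht
             (fun n => (hP n).symm) hcoh_symm
           continuous_toFun := continuous_seqLimit ht hP
           continuous_invFun := continuous_seqLimit ht fun n => (hP n).symm },
    eqOn_seqLimit ht hcoh⟩

end Limit

section BlockSwap

open Classical

variable {I J : Set ℕ} {a b y y' : ℕ → β}

noncomputable def blockSwap (I : Set ℕ) (a b y : ℕ → β) : ℕ → β :=
  if EqOn y a I then I.piecewise b y else if EqOn y b I then I.piecewise a y else y

theorem blockSwap_apply_of_notMem {n : ℕ} (hn : n ∉ I) : blockSwap I a b y n = y n := by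
  unfold blockSwap
  split_ifs <;> simp [piecewise_eq_of_notMem _ _ _ hn]

theorem blockSwap_apply_of_eq {n : ℕ} (hab : a n = b n) : blockSwap I a b y n = y n := by
  by_cases hn : n ∈ I
  · unfold blockSwap
    split_ifs with h₁ h₂
    · rw [piecewise_eq_of_mem _ _ _ hn, ← hab, h₁ hn]
    · rw [piecewise_eq_of_mem _ _ _ hn, hab, h₂ hn]
    · rfl
  · exact blockSwap_apply_of_notMem hn

theorem eqOn_blockSwap_of_eqOn (h : EqOn y a I) : EqOn (blockSwap I a b y) b I := by
  intro n hn
  simp only [blockSwap, if_pos h, piecewise_eq_of_mem _ _ _ hn]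

theorem blockSwap_eqOn_of_eqOn (hIJ : I ⊆ J) (h : EqOn y y' J) :
    EqOn (blockSwap I a b y) (blockSwap I a b y') J := by
  have hI := h.mono hIJ
  have ha : EqOn y a I ↔ EqOn y' a I := ⟨hI.symm.trans, hI.trans⟩
  have hb : EqOn y b I ↔ EqOn y' b I := ⟨hI.symm.trans, hI.trans⟩
  intro n hn
  unfold blockSwap
  simp only [ha, hb]
  split_ifs <;> by_cases hnI : n ∈ I <;> simp [hnI, h hn]

theorem blockSwap_involutive : Function.Involutive (blockSwap I a b) := by
  intro y
  funext n
  by_cases hn : n ∈ I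
  swap
  · rw [blockSwap_apply_of_notMem hn, blockSwap_apply_of_notMem hn]
  by_cases ha : EqOn y a I
  · have hb := eqOn_blockSwap_of_eqOn (b := b) ha
    by_cases hba : EqOn (blockSwap I a b y) a I
    · rw [blockSwap, if_pos hba, piecewise_eq_of_mem _ _ _ hn, ← hb hn, hba hn, ha hn]
    · rw [blockSwap, if_neg hba, if_pos hb, piecewise_eq_of_mem _ _ _ hn, ha hn]
  by_cases hb : EqOn y b I
  · have hsw : EqOn (blockSwap I a b y) a I := fun m hm => by
      simp only [blockSwap, if_neg ha, if_pos hb, piecewise_eq_of_mem _ _ _ hm]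
    rw [blockSwap, if_pos hsw, piecewise_eq_of_mem _ _ _ hn, hb hn]
  · have hsw : blockSwap I a b y = y := by simp only [blockSwap, if_neg ha, if_neg hb]
    rw [hsw, hsw]

end BlockSwap

/-- The gaps `[t, k (ψ t))` of `C` are what make the construction work: a point `d i` paired at
cut `t ≥ k i` with some `e m`, `m ≤ ψ t`, agrees with it on `C` from `t` on, as both contain
`C ∩ [k (ψ t), ∞)`. -/
structure BackAndForthData where
  C : Set ℕ
  d : ℕ → ℕ → Bool
  e : ℕ → ℕ → Bool
  k : ℕ → ℕ
  ψ : ℕ → ℕ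
  k_mono : Monotone k
  d_eq_true : ∀ i, ∀ n ∈ C, k i ≤ n → d i n = true
  e_eq_true : ∀ i, ∀ n ∈ C, k i ≤ n → e i n = true
  exists_e_near : ∀ i z, EqOn z (d i) C → ∀ t, ∃ m ≤ ψ t, EqOn (e m) z (Iio t)
  exists_d_near : ∀ i z, EqOn z (e i) C → ∀ t, ∃ m ≤ ψ t, EqOn (d m) z (Iio t)
  frequently_disjoint : ∃ᶠ t in atTop, Disjoint C (Ico t (k (ψ t)))

def BackAndForthData.swap (A : BackAndForthData) : BackAndForthData where
  C := A.C
  d := A.e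
  e := A.d
  k := A.k
  ψ := A.ψ
  k_mono := A.k_mono
  d_eq_true := A.e_eq_true
  e_eq_true := A.d_eq_true
  exists_e_near := A.exists_d_near
  exists_d_near := A.exists_e_near
  frequently_disjoint := A.frequently_disjoint

structure Stage where
  cut : ℕ
  perm : (ℕ → Bool) ≃ (ℕ → Bool)
  pairs : List ((ℕ → Bool) × (ℕ → Bool))

namespace Stage

open Classical

variable (s : Stage)

def init : Stage := ⟨0, Equiv.refl _, []⟩

instance : Inhabited Stage := ⟨init⟩

def swap : Stage := ⟨s.cut, s.perm.symm, s.pairs.map Prod.swap⟩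

theorem swap_swap : s.swap.swap = s := by
  simp [swap, Function.comp_def]

def addPair (x y : ℕ → Bool) : Stage := ⟨s.cut, s.perm, (x, y) :: s.pairs⟩

noncomputable def matchSnd (y : ℕ → Bool) : Option ((ℕ → Bool) × (ℕ → Bool)) :=
  s.pairs.find? fun p => decide (EqOn y p.2 (Iio s.cut))

/-- Composed with `s.perm`, this sends each `p.1` of a pair to the block of `p.2` on `[s.cut, t)`,
while staying an involution. -/
noncomputable def repair (t : ℕ) (y : ℕ → Bool) : ℕ → Bool :=
  (s.matchSnd y).elim y fun p => blockSwap (Ico s.cut t) p.1 p.2 y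

variable {s} {t : ℕ}

theorem matchSnd_congr {y y' : ℕ → Bool} (h : EqOn y y' (Iio s.cut)) :
    s.matchSnd y = s.matchSnd y' := by
  unfold matchSnd
  congr 1
  funext p
  exact decide_eq_decide.2 ⟨h.symm.trans, h.trans⟩

theorem repair_apply_of_notMem {y : ℕ → Bool} {n : ℕ} (hn : n ∉ Ico s.cut t) :
    s.repair t y n = y n := by
  unfold repair
  cases s.matchSnd y <;> simp [blockSwap_apply_of_notMem hn]

theorem eqOn_repair (y : ℕ → Bool) : EqOn (s.repair t y) y (Iio s.cut) :=
  fun _ hn => repair_apply_of_notMem fun h => not_le.2 hn h.1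

theorem repair_apply_of_forall {y : ℕ → Bool} {n : ℕ} (hn : ∀ p ∈ s.pairs, p.1 n = p.2 n) :
    s.repair t y n = y n := by
  unfold repair
  cases h : s.matchSnd y with
  | none => rfl
  | some p => exact blockSwap_apply_of_eq (hn p (List.mem_of_find?_eq_some h))

theorem repair_involutive (t : ℕ) : Function.Involutive (s.repair t) := by
  intro y
  have hmatch := matchSnd_congr (eqOn_repair (s := s) (t := t) y)
  unfold repair at hmatch ⊢
  cases h : s.matchSnd y with
  | none => simp only [h, Option.elim_none] at hmatch ⊢
  | some p => simp only [h, Option.elim_some] at hmatch ⊢; simp [hmatch, blockSwap_involutive _]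

theorem repair_eqOn_of_eqOn (ht : s.cut ≤ t) {y y' : ℕ → Bool} (h : EqOn y y' (Iio t)) :
    EqOn (s.repair t y) (s.repair t y') (Iio t) := by
  unfold repair
  rw [matchSnd_congr (h.mono (Iio_subset_Iio ht))]
  cases s.matchSnd y' with
  | none => exact h
  | some p => exact blockSwap_eqOn_of_eqOn (fun n hn => hn.2) h

theorem actsBelow_repair (ht : s.cut ≤ t) : ActsBelow t (repair_involutive (s := s) t).toPerm where
  apply_of_le _ _ hn := repair_apply_of_notMem fun h => not_le.2 h.2 hn
  eqOn_of_eqOn _ _ := repair_eqOn_of_eqOn ht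

variable {A : BackAndForthData} {s' s'' : Stage}

noncomputable def extend (s : Stage) (t : ℕ) : Stage :=
  ⟨t, s.perm.trans (s.repair_involutive t).toPerm, s.pairs⟩

theorem extend_perm_apply (x : ℕ → Bool) : (s.extend t).perm x = s.repair t (s.perm x) := rfl

structure Admissible (A : BackAndForthData) (s : Stage) : Prop where
  actsBelow : ActsBelow s.cut s.perm
  perm_apply_of_mem : ∀ x, ∀ n ∈ A.C, s.perm x n = x n
  pairs_mem_range : ∀ p ∈ s.pairs, p.1 ∈ range A.d ∧ p.2 ∈ range A.e
  pairs_apply_eq : ∀ p ∈ s.pairs, ∀ n ∈ A.C, s.cut ≤ n → p.1 n = p.2 n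
  eqOn_perm_pair : ∀ p ∈ s.pairs, EqOn (s.perm p.1) p.2 (Iio s.cut)
  pairs_fst_inj : ∀ p ∈ s.pairs, ∀ q ∈ s.pairs, EqOn p.1 q.1 (Iio s.cut) → p = q

structure Extends (s s' : Stage) : Prop where
  cut_lt : s.cut < s'.cut
  eqOn_perm : ∀ x, EqOn (s'.perm x) (s.perm x) (Iio s.cut)
  pairs_subset : s.pairs ⊆ s'.pairs

theorem init_admissible : init.Admissible A where
  actsBelow := ⟨fun _ _ _ => rfl, fun _ _ h => h⟩
  perm_apply_of_mem _ _ _ := rfl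
  pairs_mem_range _ h := absurd h List.not_mem_nil
  pairs_apply_eq _ h := absurd h List.not_mem_nil
  eqOn_perm_pair _ h := absurd h List.not_mem_nil
  pairs_fst_inj _ h := absurd h List.not_mem_nil

namespace Admissible

theorem eqOn_perm_symm_pair (hs : s.Admissible A) {p : (ℕ → Bool) × (ℕ → Bool)}
    (hp : p ∈ s.pairs) : EqOn (s.perm.symm p.2) p.1 (Iio s.cut) := by
  have h := hs.actsBelow.symm.eqOn_of_eqOn _ _ (hs.eqOn_perm_pair p hp)
  rw [Equiv.symm_apply_apply] at h
  exact h.symm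

theorem pairs_snd_inj (hs : s.Admissible A) :
    ∀ p ∈ s.pairs, ∀ q ∈ s.pairs, EqOn p.2 q.2 (Iio s.cut) → p = q := fun p hp q hq h =>
  hs.pairs_fst_inj p hp q hq <| (hs.eqOn_perm_symm_pair hp).symm.trans <|
    (hs.actsBelow.symm.eqOn_of_eqOn _ _ h).trans (hs.eqOn_perm_symm_pair hq)

theorem swap (hs : s.Admissible A) : s.swap.Admissible A.swap where
  actsBelow := hs.actsBelow.symm
  perm_apply_of_mem x n hn := by
    conv_rhs => rw [← s.perm.apply_symm_apply x]
    exact (hs.perm_apply_of_mem _ n hn).symm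
  pairs_mem_range := List.forall_mem_map.2 fun p hp => (hs.pairs_mem_range p hp).symm
  pairs_apply_eq := List.forall_mem_map.2 fun p hp n hn hnt =>
    (hs.pairs_apply_eq p hp n hn hnt).symm
  eqOn_perm_pair := List.forall_mem_map.2 fun _ => hs.eqOn_perm_symm_pair
  pairs_fst_inj := List.forall_mem_map.2 fun p hp => List.forall_mem_map.2 fun q hq h =>
    congrArg Prod.swap (hs.pairs_snd_inj p hp q hq h)

theorem repair_perm_pair (hs : s.Admissible A) {p : (ℕ → Bool) × (ℕ → Bool)}
    (hp : p ∈ s.pairs) :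
    s.repair t (s.perm p.1) = blockSwap (Ico s.cut t) p.1 p.2 (s.perm p.1) := by
  obtain ⟨q, hq⟩ : ∃ q, s.matchSnd (s.perm p.1) = some q := by
    refine Option.ne_none_iff_exists'.1 fun h => ?_
    have := List.find?_eq_none.1 h p hp
    simp [hs.eqOn_perm_pair p hp] at this
  have hqp : q = p := by
    refine hs.pairs_snd_inj q (List.mem_of_find?_eq_some hq) p hp ?_
    have := List.find?_some hq
    simp only [decide_eq_true_eq] at this
    exact this.symm.trans (hs.eqOn_perm_pair p hp)
  simp [repair, hq, hqp]

theorem extend (hs : s.Admissible A) (ht : s.cut ≤ t) : (s.extend t).Admissible A where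
  actsBelow := (hs.actsBelow.mono ht).trans (actsBelow_repair ht)
  perm_apply_of_mem x n hn := by
    rw [extend_perm_apply, ← hs.perm_apply_of_mem x n hn]
    rcases lt_or_ge n s.cut with hnt | hnt
    · exact eqOn_repair _ hnt
    · exact repair_apply_of_forall fun p hp => hs.pairs_apply_eq p hp n hn hnt
  pairs_mem_range := hs.pairs_mem_range
  pairs_apply_eq p hp n hn hnt := hs.pairs_apply_eq p hp n hn (ht.trans hnt)
  eqOn_perm_pair p hp n hn := by
    change s.repair t (s.perm p.1) n = p.2 n
    rw [hs.repair_perm_pair hp]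
    by_cases hnI : n ∈ Ico s.cut t
    · refine eqOn_blockSwap_of_eqOn (fun m hm => ?_) hnI
      exact hs.actsBelow.apply_of_le _ m hm.1
    · rw [blockSwap_apply_of_notMem hnI]
      exact hs.eqOn_perm_pair p hp (lt_of_not_ge fun h => hnI ⟨h, hn⟩)
  pairs_fst_inj p hp q hq h := hs.pairs_fst_inj p hp q hq (h.mono (Iio_subset_Iio ht))

theorem addPair (hs : s.Admissible A) {x y : ℕ → Bool} (hx : x ∈ range A.d) (hy : y ∈ range A.e)
    (hxy : EqOn (s.perm x) y (Iio s.cut)) (hC : ∀ n ∈ A.C, s.cut ≤ n → x n = y n)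
    (hsep : ∀ p ∈ s.pairs, ¬ EqOn x p.1 (Iio s.cut)) : (s.addPair x y).Admissible A where
  actsBelow := hs.actsBelow
  perm_apply_of_mem := hs.perm_apply_of_mem
  pairs_mem_range := List.forall_mem_cons.2 ⟨⟨hx, hy⟩, hs.pairs_mem_range⟩
  pairs_apply_eq := List.forall_mem_cons.2 ⟨hC, hs.pairs_apply_eq⟩
  eqOn_perm_pair := List.forall_mem_cons.2 ⟨hxy, hs.eqOn_perm_pair⟩
  pairs_fst_inj p hp q hq h := by
    simp only [Stage.addPair, List.mem_cons] at hp hq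
    rcases hp with rfl | hp <;> rcases hq with rfl | hq
    · rfl
    · exact absurd h (hsep q hq)
    · exact absurd h.symm (hsep p hp)
    · exact hs.pairs_fst_inj p hp q hq h

end Admissible

namespace Extends

theorem trans (h : s.Extends s') (h' : s'.Extends s'') : s.Extends s'' where
  cut_lt := h.cut_lt.trans h'.cut_lt
  eqOn_perm x := ((h'.eqOn_perm x).mono (Iio_subset_Iio h.cut_lt.le)).trans (h.eqOn_perm x)
  pairs_subset := List.Subset.trans h.pairs_subset h'.pairs_subset

theorem addPair (h : s.Extends s') (x y : ℕ → Bool) : s.Extends (s'.addPair x y) where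
  cut_lt := h.cut_lt
  eqOn_perm := h.eqOn_perm
  pairs_subset := List.Subset.trans h.pairs_subset (List.subset_cons_self _ _)

theorem swap (hs : ActsBelow s.cut s.perm) (h : s.Extends s') : s.swap.Extends s'.swap where
  cut_lt := h.cut_lt
  eqOn_perm := hs.eqOn_symm h.eqOn_perm
  pairs_subset := List.map_subset _ h.pairs_subset

end Extends

theorem extends_extend (ht : s.cut < t) : s.Extends (s.extend t) where
  cut_lt := ht
  eqOn_perm _ := eqOn_repair _
  pairs_subset := List.Subset.refl _

end Stage

namespace Stage.Admissible

variable {A : BackAndForthData} {s : Stage}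

theorem exists_extends_fst (hs : s.Admissible A) (i : ℕ) :
    ∃ s', s'.Admissible A ∧ s.Extends s' ∧ ∃ p ∈ s'.pairs, p.1 = A.d i := by
  obtain ⟨t, hgap, hcut, hki, hsep⟩ : ∃ t, Disjoint A.C (Ico t (A.k (A.ψ t))) ∧ s.cut < t ∧
      A.k i ≤ t ∧ ∀ p ∈ s.pairs, EqOn (A.d i) p.1 (Iio t) → A.d i = p.1 :=
    (A.frequently_disjoint.and_eventually <| (eventually_gt_atTop _).and <|
      (eventually_ge_atTop _).and <| (eventually_all_finite s.pairs.finite_toSet).2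
        fun p _ => eventually_eqOn_Iio_imp_eq _ _).exists
  have hs₁ := hs.extend hcut.le
  by_cases hpaired : ∃ p ∈ s.pairs, p.1 = A.d i
  · exact ⟨_, hs₁, extends_extend hcut, hpaired⟩
  obtain ⟨m, hm, hym⟩ := A.exists_e_near i _ (fun n hn => hs₁.perm_apply_of_mem _ n hn) t
  refine ⟨_, hs₁.addPair ⟨i, rfl⟩ ⟨m, rfl⟩ hym.symm (fun n hn htn => ?_) fun p hp h => ?_,
    (extends_extend hcut).addPair _ _, _, List.mem_cons_self, rfl⟩
  · have hkn : A.k (A.ψ t) ≤ n := not_lt.1 fun h => disjoint_left.1 hgap hn ⟨htn, h⟩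
    rw [A.d_eq_true i n hn (hki.trans htn), A.e_eq_true m n hn ((A.k_mono hm).trans hkn)]
  · exact hpaired ⟨p, hp, (hsep p hp h).symm⟩

theorem exists_extends_snd (hs : s.Admissible A) (i : ℕ) :
    ∃ s', s'.Admissible A ∧ s.Extends s' ∧ ∃ p ∈ s'.pairs, p.2 = A.e i := by
  obtain ⟨s', hs', hext, p, hp, hpi⟩ := hs.swap.exists_extends_fst i
  refine ⟨s'.swap, hs'.swap, ?_, p.swap, List.mem_map_of_mem hp, hpi⟩
  simpa only [swap_swap] using hext.swap hs.swap.actsBelow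

theorem exists_extends_pairs (hs : s.Admissible A) (i : ℕ) :
    ∃ s', s'.Admissible A ∧ s.Extends s' ∧
      (∃ p ∈ s'.pairs, p.1 = A.d i) ∧ ∃ p ∈ s'.pairs, p.2 = A.e i := by
  obtain ⟨s₁, hs₁, hext₁, p, hp, hpi⟩ := hs.exists_extends_fst i
  obtain ⟨s₂, hs₂, hext₂, hpair⟩ := hs₁.exists_extends_snd i
  exact ⟨s₂, hs₂, hext₁.trans hext₂, ⟨p, hext₂.pairs_subset hp, hpi⟩, hpair⟩

end Stage.Admissible

namespace BackAndForthData

variable (A : BackAndForthData)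

theorem exists_stages : ∃ s : ℕ → Stage, (∀ n, (s n).Admissible A) ∧
    (∀ n, (s n).Extends (s (n + 1))) ∧ (∀ i, ∃ p ∈ (s (i + 1)).pairs, p.1 = A.d i) ∧
    ∀ i, ∃ p ∈ (s (i + 1)).pairs, p.2 = A.e i := by
  choose! next hnext using fun (s : Stage) (hs : s.Admissible A) i => hs.exists_extends_pairs i
  let s : ℕ → Stage := fun n => Nat.rec Stage.init (fun i s => next s i) n
  have hs : ∀ n, (s n).Admissible A := fun n => by
    induction n with
    | zero => exact Stage.init_admissible
    | succ n ih => exact (hnext _ ih n).1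
  exact ⟨s, hs, fun n => (hnext _ (hs n) n).2.1, fun i => (hnext _ (hs i) i).2.2.1,
    fun i => (hnext _ (hs i) i).2.2.2⟩

theorem exists_homeomorph : ∃ h : (ℕ → Bool) ≃ₜ (ℕ → Bool),
    (∀ x, EqOn (h x) x A.C) ∧ h '' range A.d = range A.e := by
  obtain ⟨s, hs, hext, hd, he⟩ := A.exists_stages
  have hcut : StrictMono fun n => (s n).cut := strictMono_nat_of_lt_succ fun n => (hext n).cut_lt
  obtain ⟨h, hh⟩ := exists_homeomorph_eqOn_Iio hcut (fun n => (hs n).actsBelow)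
    fun n => (hext n).eqOn_perm
  have hpairs : ∀ n m, n ≤ m → (s n).pairs ⊆ (s m).pairs := fun n m hnm => by
    induction m, hnm using Nat.le_induction with
    | base => exact List.Subset.refl _
    | succ m _ ih => exact List.Subset.trans ih (hext m).pairs_subset
  have hh_pair : ∀ n, ∀ p ∈ (s n).pairs, h p.1 = p.2 := fun n p hp => funext fun j => by
    have hm := hpairs n (max n (j + 1)) (le_max_left _ _) hp
    have hj : j < (s (max n (j + 1))).cut :=
      j.lt_succ_self.trans_le ((le_max_right _ _).trans (hcut.id_le _))
    exact (hh _ p.1 hj).trans ((hs _).eqOn_perm_pair p hm hj)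
  refine ⟨h, fun x n hn => ?_, ?_⟩
  · exact (hh (n + 1) x (hcut.id_le _)).trans ((hs (n + 1)).perm_apply_of_mem x n hn)
  · apply Subset.antisymm
    · rintro _ ⟨_, ⟨i, rfl⟩, rfl⟩
      obtain ⟨p, hp, hpi⟩ := hd i
      rw [← hpi, hh_pair _ p hp]
      exact ((hs _).pairs_mem_range p hp).2
    · rintro _ ⟨i, rfl⟩
      obtain ⟨p, hp, hpi⟩ := he i
      exact ⟨p.1, ((hs _).pairs_mem_range p hp).1, hpi ▸ hh_pair _ p hp⟩

end BackAndForthData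

theorem exists_mem_frequently_eq_false_on_Ico {S : Set (ℕ → Bool)} (hS : ¬ IsMeagre S) (φ : ℕ → ℕ) :
    ∃ x ∈ S, ∃ᶠ t in atTop, ∀ n ∈ Ico t (φ t), x n = false := by
  by_contra! hcon
  set G : ℕ → Set (ℕ → Bool) := fun N => {x | ∀ t ≥ N, ∃ n ∈ Ico t (φ t), x n = true}
  have hSG : S ⊆ ⋃ N, G N := fun x hx => by
    obtain ⟨N, hN⟩ := eventually_atTop.1 (hcon x hx)
    refine mem_iUnion.2 ⟨N, fun t ht => ?_⟩
    simpa using hN t ht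
  have hG_closed N : IsClosed (G N) := by
    have : G N = ⋂ t ≥ N, ⋃ n ∈ Finset.Ico t (φ t), {x | x n = true} := by
      ext x
      simp [G]
    rw [this]
    exact isClosed_biInter fun t _ => isClosed_biUnion_finset fun n _ =>
      isClosed_eq (continuous_apply n) continuous_const
  have hG_nowhereDense N : IsNowhereDense (G N) := by
    classical
    refine (hG_closed N).isNowhereDense_iff.2 (eq_empty_of_forall_notMem fun x hx => ?_)
    obtain ⟨T, hT⟩ := exists_cylinder_subset_of_mem_nhds (isOpen_interior.mem_nhds hx)
    set t := max N T
    have hy : (Ico t (φ t)).piecewise (fun _ => false) x ∈ G N := interior_subset <| hT fun n hn =>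
      piecewise_eq_of_notMem _ _ _ fun h => not_le.2 hn ((le_max_right N T).trans h.1)
    obtain ⟨n, hn, hyn⟩ := hy t (le_max_left N T)
    simp [piecewise_eq_of_mem _ _ _ hn] at hyn
  exact hS <| (isMeagre_iUnion fun N => (hG_nowhereDense N).isMeagre).mono hSG

theorem IsPFilterOn.exists_mem_forall_ge_mem {F : Set (Set ℕ)} (hP : IsPFilterOn F)
    {X : ℕ → Set ℕ} (hX : ∀ n, X n ∈ F) :
    ∃ Y ∈ F, ∃ k : ℕ → ℕ, Monotone k ∧ ∀ i, ∀ m ∈ Y, k i ≤ m → m ∈ X i := by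
  obtain ⟨Y, hY, hfin⟩ := hP X hX
  choose b hb using fun n => (hfin n).bddAbove
  refine ⟨Y, hY, fun i => (Finset.range (i + 1)).sup b + 1, fun i j hij => ?_, fun i m hm hkm => ?_⟩
  · exact Nat.succ_le_succ (Finset.sup_mono (Finset.range_mono (Nat.succ_le_succ hij)))
  · by_contra hmX
    dsimp only at hkm
    have := (hb i ⟨hm, hmX⟩).trans (Finset.le_sup (Finset.self_mem_range_succ i))
    omega

theorem exists_bound_eqOn_Iio {β : Type*} [Finite β] (e : ℕ → ℕ → β) (t : ℕ) :
    ∃ M, ∀ j, ∃ m ≤ M, EqOn (e m) (e j) (Iio t) := by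
  set pattern : ℕ → Fin t → β := fun j i => e j i
  choose g hg using fun p : range pattern => p.2
  obtain ⟨M, hM⟩ := (finite_range g).bddAbove
  refine ⟨M, fun j => ⟨g ⟨_, j, rfl⟩, hM ⟨_, rfl⟩, fun n hn => ?_⟩⟩
  exact congrFun (hg ⟨_, j, rfl⟩) ⟨n, hn⟩

theorem exists_bound_eqOn_of_subset_closure {β : Type*} [TopologicalSpace β] [DiscreteTopology β]
    [Finite β] {S : Set (ℕ → β)} {e : ℕ → ℕ → β}
    (hS : S ⊆ closure (range e)) : ∃ ψ : ℕ → ℕ, ∀ t, ∀ z ∈ S, ∃ m ≤ ψ t, EqOn (e m) z (Iio t) := by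
  choose ψ hψ using exists_bound_eqOn_Iio e
  refine ⟨ψ, fun t z hz => ?_⟩
  obtain ⟨_, hj, j, rfl⟩ := mem_closure_iff.1 (hS hz) _ (isOpen_cylinder _ z t)
    (self_mem_cylinder z t)
  obtain ⟨m, hm, hmj⟩ := hψ t j
  exact ⟨m, hm, hmj.trans hj⟩

theorem mem_cantorCopy_of_eqOn {α : Type*} {F : Set (Set α)} (hF : IsFilterOn F) {C : Set α}
    (hC : C ∈ F) {x z : α → Bool} (hx : x ∈ cantorCopy F) (h : EqOn z x C) : z ∈ cantorCopy F :=
  hF.2.2.2 _ _ (hF.2.2.1 _ _ hx hC) fun _ hn => (h hn.2).trans hn.1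

theorem exists_backAndForthData {F : Set (Set ℕ)} (hF : IsFilterOn F) (hP : IsPFilterOn F)
    (hNM : NonMeagerFamily F) {d e : ℕ → ℕ → Bool} (hd : range d ⊆ cantorCopy F)
    (hd_dense : cantorCopy F ⊆ closure (range d)) (he : range e ⊆ cantorCopy F)
    (he_dense : cantorCopy F ⊆ closure (range e)) :
    ∃ A : BackAndForthData, A.C ∈ F ∧ A.d = d ∧ A.e = e := by
  obtain ⟨C, hC, k, hk, hCk⟩ := IsPFilterOn.exists_mem_forall_ge_mem hP
    (X := fun i => toSet (d i) ∩ toSet (e i)) fun i => hF.2.2.1 _ _ (hd ⟨i, rfl⟩) (he ⟨i, rfl⟩)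
  obtain ⟨ψd, hψd⟩ := exists_bound_eqOn_of_subset_closure hd_dense
  obtain ⟨ψe, hψe⟩ := exists_bound_eqOn_of_subset_closure he_dense
  obtain ⟨z, hz, hgap⟩ := exists_mem_frequently_eq_false_on_Ico hNM fun t => k (ψd t ⊔ ψe t)
  have hCz : C ∩ toSet z ∈ F := hF.2.2.1 _ _ hC hz
  refine ⟨{
    C := C ∩ toSet z
    d, e, k
    ψ := ψd ⊔ ψe
    k_mono := hk
    d_eq_true := fun i n hn hkn => (hCk i n hn.1 hkn).1
    e_eq_true := fun i n hn hkn => (hCk i n hn.1 hkn).2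
    exists_e_near := fun i x hx t => ?_
    exists_d_near := fun i x hx t => ?_
    frequently_disjoint := hgap.mono fun t ht => disjoint_left.2 fun n hn hnt => by
      simp [toSet, ht n hnt] at hn }, hCz, rfl, rfl⟩
  · obtain ⟨m, hm, hmx⟩ := hψe t x (mem_cantorCopy_of_eqOn hF hCz (hd ⟨i, rfl⟩) hx)
    exact ⟨m, hm.trans le_sup_right, hmx⟩
  · obtain ⟨m, hm, hmx⟩ := hψd t x (mem_cantorCopy_of_eqOn hF hCz (he ⟨i, rfl⟩) hx)
    exact ⟨m, hm.trans le_sup_left, hmx⟩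

theorem _root_.Homeomorph.exists_subtype_image_eq {X : Type*} [TopologicalSpace X] {S : Set X}
    (h : X ≃ₜ X) (hS : ∀ x, x ∈ S ↔ h x ∈ S) {D E : Set S}
    (hDE : h '' (Subtype.val '' D) = Subtype.val '' E) : ∃ h' : S ≃ₜ S, h' '' D = E := by
  refine ⟨h.subtype hS, Subtype.val_injective.image_injective ?_⟩
  rw [← hDE, image_image, image_image]
  rfl

end PFilterCDH

open PFilterCDH

theorem stmt0_general (F : Set (Set ℕ)) (hF : IsFilterOn F)
    (hP : IsPFilterOn F) (hNM : NonMeagerFamily F) :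
    CDH ↥(cantorCopy F) := by
  intro D E hD hDd hE hEd
  have : Nonempty (cantorCopy F) := ⟨⟨fun _ => true, by simpa [cantorCopy, toSet] using hF.1⟩⟩
  obtain ⟨d, hd⟩ := (hD.image Subtype.val).exists_eq_range (hDd.nonempty.image _)
  obtain ⟨e, he⟩ := (hE.image Subtype.val).exists_eq_range (hEd.nonempty.image _)
  obtain ⟨A, hC, rfl, rfl⟩ := exists_backAndForthData hF hP hNM
    (hd ▸ Subtype.coe_image_subset _ _) (hd ▸ Subtype.dense_iff.1 hDd)
    (he ▸ Subtype.coe_image_subset _ _) (he ▸ Subtype.dense_iff.1 hEd)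
  obtain ⟨h, hhC, hh⟩ := A.exists_homeomorph
  refine h.exists_subtype_image_eq (fun x => ⟨fun hx => ?_, fun hx => ?_⟩) (by rw [hd, he, hh])
  · exact mem_cantorCopy_of_eqOn hF hC hx (hhC x)
  · exact mem_cantorCopy_of_eqOn hF hC hx (hhC x).symm

/-- A non-meager P-filter on `ω` extending the Fréchet filter, viewed as a subspace
of the Cantor space, is countable dense homogeneous. -/
theorem stmt0 (F : Set (Set ℕ)) (hF : IsFilterOn F) (hFr : ExtendsFrechet F)
    (hP : IsPFilterOn F) (hNM : NonMeagerFamily F) :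
    CDH ↥(cantorCopy F) :=
  stmt0_general F hF hP hNM
end

section
/- Let F be a non-meager P-filter on ω extending the Fréchet filter. Then the countable power F^ω (with the product topology, F carrying the subspace topology from 2^ω) is countable dense homogeneous. -/
/-!
Through `ℕ ≅ ℕ × ℕ`, `F^ω` is homeomorphic to the family `G` of sets all of whose columns lie in
`F`. `G` is again a P-filter extending the Fréchet filter, and it inherits from `F` the
combinatorial trace of non-meagerness (Talagrand): for every partition of `ℕ` into finite
intervals, some member of `G` misses infinitely many of the intervals.

Such a filter `G` is CDH. Given countable dense `D, E ⊆ G`, the P-property and the interval gaps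
yield `X ∈ G`, almost contained in every member of `D ∪ E`, such that every finite pattern begins
some point of `D` (and of `E`) that contains `X` beyond the pattern. A back-and-forth
construction then builds a homeomorphism `h` of `2^ω` with `h[D] = E` as a limit of permutations
of finite initial segments that fix the coordinates in `X`. Since `h x ∩ X = x ∩ X` and `X ∈ G`,
`h` maps `G` onto itself.
-/

open Set

namespace IsFilterOn

variable {α : Type*} {G : Set (Set α)}

lemma inter_mem (hG : IsFilterOn G) {A B : Set α} (hA : A ∈ G) (hB : B ∈ G) : A ∩ B ∈ G :=
  hG.2.2.1 A B hA hB

lemma mem_of_superset (hG : IsFilterOn G) {A B : Set α} (hA : A ∈ G) (hAB : A ⊆ B) : B ∈ G :=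
  hG.2.2.2 A B hA hAB

lemma diff_mem (hG : IsFilterOn G) (hFr : ExtendsFrechet G) {A S : Set α} (hA : A ∈ G)
    (hS : S.Finite) : A \ S ∈ G :=
  hG.inter_mem hA (hFr Sᶜ (by rwa [compl_compl]))

lemma toSet_mem_of_eqOn (hG : IsFilterOn G) {X : Set α} (hX : X ∈ G) {x y : α → Bool}
    (hxy : EqOn x y X) (hx : toSet x ∈ G) : toSet y ∈ G :=
  hG.mem_of_superset (hG.inter_mem hx hX) fun _ ⟨hn, hnX⟩ => (hxy hnX).symm.trans hn

end IsFilterOn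

lemma IsPFilterOn.exists_diff_finite {α ι : Type*} [Countable ι] [Nonempty ι] {G : Set (Set α)}
    (hP : IsPFilterOn G) {W : ι → Set α} (hW : ∀ i, W i ∈ G) :
    ∃ Y ∈ G, ∀ i, (Y \ W i).Finite := by
  obtain ⟨f, hf⟩ := exists_surjective_nat ι
  obtain ⟨Y, hY, hYW⟩ := hP (W ∘ f) fun n => hW (f n)
  exact ⟨Y, hY, hf.forall.2 hYW⟩

lemma CDH.of_homeomorph {X Y : Type*} [TopologicalSpace X] [TopologicalSpace Y] (h : X ≃ₜ Y)
    (hX : CDH X) : CDH Y := by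
  intro D E hD hDd hE hEd
  obtain ⟨g, hg⟩ := hX (h.symm '' D) (h.symm '' E) (hD.image _)
    (h.symm.isDenseEmbedding.dense_image.2 hDd) (hE.image _)
    (h.symm.isDenseEmbedding.dense_image.2 hEd)
  refine ⟨(h.symm.trans g).trans h, ?_⟩
  have hcomp : ⇑((h.symm.trans g).trans h) = h ∘ g ∘ h.symm := rfl
  rw [hcomp, image_comp, image_comp, hg]
  exact h.image_symm_image E

namespace FilterCDH

open PiNat

lemma exists_forall_ge_mem_of_diff_finite {Y A : Set ℕ} (h : (Y \ A).Finite) :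
    ∃ N, ∀ n ≥ N, n ∈ Y → n ∈ A := by
  obtain ⟨N, hN⟩ := (Nat.cofinite_eq_atTop ▸ h.eventually_cofinite_notMem).exists_forall_of_atTop
  exact ⟨N, fun n hn hY => by_contra fun hA => hN n hn ⟨hY, hA⟩⟩

lemma exists_seq_of_forall_exists {α : Type*} (x₀ : α) {R : ℕ → α → α → Prop}
    (h : ∀ n x, ∃ y, R n x y) : ∃ f : ℕ → α, f 0 = x₀ ∧ ∀ n, R n (f n) (f (n + 1)) := by
  choose g hg using h
  exact ⟨fun n => Nat.rec x₀ g n, rfl, fun n => hg n _⟩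

lemma exists_cylinder_subset {E : ℕ → Type*} [∀ n, TopologicalSpace (E n)]
    [∀ n, DiscreteTopology (E n)] {U : Set (∀ n, E n)} (hU : IsOpen U) {x : ∀ n, E n}
    (hx : x ∈ U) : ∃ m, cylinder x m ⊆ U := by
  obtain ⟨_, ⟨y, m, rfl⟩, hxy, hyU⟩ :=
    (isTopologicalBasis_cylinders E).exists_subset_of_mem_open hx hU
  exact ⟨m, mem_cylinder_iff_eq.1 hxy ▸ hyU⟩

/-- Talagrand's combinatorial form of non-meagerness. -/
def HasIntervalGaps (G : Set (Set ℕ)) : Prop :=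
  ∀ b : ℕ → ℕ, StrictMono b → ∃ X ∈ G, {p | Disjoint X (Ico (b p) (b (p + 1)))}.Infinite

lemma isNowhereDense_setOf_forall_ge_exists_mem_Ico {b : ℕ → ℕ} (hb : StrictMono b) (q : ℕ) :
    IsNowhereDense {x : ℕ → Bool | ∀ p ≥ q, ∃ n ∈ Ico (b p) (b (p + 1)), x n = true} := by
  set N := {x : ℕ → Bool | ∀ p ≥ q, ∃ n ∈ Ico (b p) (b (p + 1)), x n = true}
  have hN : IsClosed N := by
    have : N = ⋂ p ≥ q, ⋃ n ∈ Ico (b p) (b (p + 1)), {x | x n = true} := by ext; simp [N]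
    rw [this]
    exact isClosed_biInter fun p _ => (finite_Ico _ _).isClosed_biUnion fun n _ =>
      isClosed_singleton.preimage (continuous_apply n)
  refine hN.isNowhereDense_iff.2 (eq_empty_of_forall_notMem fun x hx => ?_)
  obtain ⟨m, hm⟩ := exists_cylinder_subset isOpen_interior hx
  -- switching off a whole interval beyond `m` leaves the cylinder but exits `N`
  set p := max q m
  set y : ℕ → Bool := fun n => if n ∈ Ico (b p) (b (p + 1)) then false else x n
  have hy : y ∈ cylinder x m := fun n hn => if_neg fun h =>
    (hn.trans_le ((le_max_right q m).trans (hb.id_le p))).not_ge h.1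
  obtain ⟨n, hn, hyn⟩ := interior_subset (hm hy) p (le_max_left q m)
  exact Bool.false_ne_true ((if_pos hn).symm.trans hyn)

theorem _root_.NonMeagerFamily.hasIntervalGaps {F : Set (Set ℕ)} (hF : NonMeagerFamily F) :
    HasIntervalGaps F := by
  intro b hb
  by_contra! hgaps
  refine hF ((isMeagre_iUnion fun q =>
    (isNowhereDense_setOf_forall_ge_exists_mem_Ico hb q).isMeagre).mono fun x hx => ?_)
  obtain ⟨q, hq⟩ := (hgaps _ hx).bddAbove
  refine mem_iUnion.2 ⟨q + 1, fun p hp => ?_⟩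
  by_contra! hxp
  have hgap : Disjoint (toSet x) (Ico (b p) (b (p + 1))) :=
    Set.disjoint_left.2 fun n hn hnp => hxp n hnp hn
  exact absurd (hq hgap) (by omega)

def column (A : Set ℕ) (j : ℕ) : Set ℕ := {m | Nat.pair j m ∈ A}

def ofColumns (B : ℕ → Set ℕ) : Set ℕ := {n | (Nat.unpair n).2 ∈ B (Nat.unpair n).1}

@[simp]
lemma column_ofColumns (B : ℕ → Set ℕ) (j : ℕ) : column (ofColumns B) j = B j := by
  ext m
  simp [column, ofColumns]

lemma pair_right_injective (j : ℕ) : Function.Injective (Nat.pair j) :=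
  fun _ _ h => (Nat.pair_eq_pair.1 h).2

lemma finite_column {A : Set ℕ} (hA : A.Finite) (j : ℕ) : (column A j).Finite :=
  hA.preimage (pair_right_injective j).injOn

/-- The copy of `F^ω` in `𝒫(ℕ)`, through `Nat.pair`. -/
def countablePower (F : Set (Set ℕ)) : Set (Set ℕ) := {A | ∀ j, column A j ∈ F}

variable {F : Set (Set ℕ)}

lemma _root_.IsFilterOn.countablePower (hF : IsFilterOn F) : IsFilterOn (countablePower F) :=
  ⟨fun _ => hF.1, fun h => hF.2.1 (h 0), fun _ _ hA hB j => hF.inter_mem (hA j) (hB j),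
    fun _ _ hA hAB j => hF.mem_of_superset (hA j) fun _ hm => hAB hm⟩

lemma _root_.ExtendsFrechet.countablePower (hFr : ExtendsFrechet F) :
    ExtendsFrechet (countablePower F) :=
  fun _ hA j => hFr _ (finite_column hA j)

lemma _root_.IsPFilterOn.countablePower (hF : IsFilterOn F) (hFr : ExtendsFrechet F)
    (hP : IsPFilterOn F) : IsPFilterOn (countablePower F) := by
  intro A hA
  obtain ⟨Y, hY, hYA⟩ := hP.exists_diff_finite (W := fun jk : ℕ × ℕ => column (A jk.2) jk.1)
    fun jk => hA jk.2 jk.1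
  -- column `j` of the pseudo-intersection only has to follow the first `j + 1` sets
  set B : ℕ → Set ℕ := fun j => {m ∈ Y | ∀ k ≤ j, m ∈ column (A k) j}
  have hB : ∀ j, B j ∈ F := fun j =>
    hF.mem_of_superset (hF.diff_mem hFr hY ((finite_Iic j).biUnion fun k _ => hYA (j, k)))
      fun m ⟨hmY, hm⟩ => ⟨hmY, fun k hk => by_contra fun h => hm (mem_biUnion hk ⟨hmY, h⟩)⟩
  refine ⟨ofColumns B, fun j => by simpa using hB j, fun k => ?_⟩
  refine ((finite_Iio k).biUnion fun j _ => (hYA (j, k)).image (Nat.pair j)).subset ?_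
  rintro n ⟨⟨hnY, hnA⟩, hnk⟩
  have hn : Nat.pair (Nat.unpair n).1 (Nat.unpair n).2 = n := Nat.pair_unpair n
  have hkj : (Nat.unpair n).1 < k := lt_of_not_ge fun h => hnk (hn ▸ hnA k h)
  exact mem_biUnion hkj ⟨_, ⟨hnY, fun h => hnk (hn ▸ h)⟩, hn⟩

lemma exists_intervals_capturing_columns {b : ℕ → ℕ} (hb : StrictMono b) :
    ∃ a ν : ℕ → ℕ, StrictMono a ∧ StrictMono ν ∧
      ∀ p, ∀ j ≤ p, column (Ico (b (ν p)) (b (ν p + 1))) j ⊆ Ico (a p) (a (p + 1)) := by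
  set J : ℕ → Set ℕ := fun n => Ico (b n) (b (n + 1))
  have hJ : ∀ i, {n | i ∈ J n}.Subsingleton := fun i n hn n' hn' =>
    by_contra fun h => Set.disjoint_left.1 (hb.monotone.pairwise_disjoint_on_Ico_succ h) hn hn'
  have hlow : ∀ a k, {n | ∃ j ≤ k, ∃ m < a, Nat.pair j m ∈ J n}.Finite := fun a k =>
    ((finite_Iic k).biUnion fun j _ => (finite_Iio a).biUnion fun m _ => (hJ _).finite).subset
      fun n ⟨j, hj, m, hm, hn⟩ => mem_biUnion hj (mem_biUnion hm hn)
  have hup : ∀ n k, ∃ a, ∀ j ≤ k, column (J n) j ⊆ Iio a := fun n k => by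
    obtain ⟨c, hc⟩ := ((finite_Iic k).biUnion fun j _ => finite_column (finite_Ico _ _) j).bddAbove
    exact ⟨c + 1, fun j hj m hm => Nat.lt_succ_of_le (hc (mem_biUnion hj hm))⟩
  obtain ⟨f, hf0, hf⟩ := exists_seq_of_forall_exists (0, 0)
    (R := fun p s s' => s.1 < s'.1 ∧ s.2 < s'.2 ∧ (∀ j ≤ p, column (J s.2) j ⊆ Iio s'.1) ∧
      ∀ j ≤ p + 1, column (J s'.2) j ⊆ Ici s'.1) fun p s => by
    obtain ⟨a, ha⟩ := hup s.2 p
    obtain ⟨ν, hν, hνs⟩ := (hlow (max (s.1 + 1) a) (p + 1)).infinite_compl.exists_gt s.2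
    refine ⟨(max (s.1 + 1) a, ν), by simp, hνs, fun j hj m hm => ?_, fun j hj m hm => ?_⟩
    · exact lt_max_of_lt_right (mem_Iio.1 (ha j hj hm))
    · exact not_lt.1 fun h => hν ⟨j, hj, m, h, hm⟩
  refine ⟨fun p => (f p).1, fun p => (f p).2, strictMono_nat_of_lt_succ fun p => (hf p).1,
    strictMono_nat_of_lt_succ fun p => (hf p).2.1, fun p j hj m hm => ⟨?_, (hf p).2.2.1 j hj hm⟩⟩
  cases p with
  | zero => simp [hf0]
  | succ p => exact (hf p).2.2.2 j hj hm

lemma HasIntervalGaps.countablePower {F : Set (Set ℕ)} (hF : IsFilterOn F)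
    (hFr : ExtendsFrechet F) (hgap : HasIntervalGaps F) : HasIntervalGaps (countablePower F) := by
  intro b hb
  set J : ℕ → Set ℕ := fun n => Ico (b n) (b (n + 1))
  obtain ⟨a, ν, ha, hν, hcap⟩ := exists_intervals_capturing_columns hb
  obtain ⟨B, hB, hQ⟩ := hgap a ha
  -- column `j` avoids the intervals `ν q` with `q ≥ j` because `B` misses `[a q, a (q + 1))`,
  -- and the finitely many with `q < j` are removed by hand
  set C : ℕ → Set ℕ := fun j => B \ ⋃ q ∈ Iio j, column (J (ν q)) j
  refine ⟨ofColumns C, fun j => ?_, (hQ.image hν.injective.injOn).mono ?_⟩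
  · rw [column_ofColumns]
    exact hF.diff_mem hFr hB ((finite_Iio j).biUnion fun q _ => finite_column (finite_Ico _ _) j)
  rintro _ ⟨q, hq, rfl⟩
  refine Set.disjoint_left.2 fun n ⟨hnB, hnq⟩ hnJ => ?_
  have hn : (Nat.unpair n).2 ∈ column (J (ν q)) (Nat.unpair n).1 := by
    rwa [column, mem_ofPred_eq, Nat.pair_unpair]
  rcases le_or_gt (Nat.unpair n).1 q with hjq | hqj
  · exact Set.disjoint_left.1 hq hnB (hcap q _ hjq hn)
  · exact hnq (mem_biUnion hqj hn)

def powerHomeomorph (F : Set (Set ℕ)) : (ℕ → cantorCopy F) ≃ₜ cantorCopy (countablePower F) where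
  toFun x := ⟨fun n => (x (Nat.unpair n).1).1 (Nat.unpair n).2, fun j => by
    have hcol : column (toSet fun n => (x (Nat.unpair n).1).1 (Nat.unpair n).2) j =
        toSet (x j).1 := by
      ext m
      simp [column, toSet]
    exact hcol ▸ (x j).2⟩
  invFun y j := ⟨fun m => y.1 (Nat.pair j m), y.2 j⟩
  left_inv x := by ext; simp
  right_inv y := by ext; simp
  continuous_toFun := by
    refine Continuous.subtype_mk ?_ _
    exact continuous_pi fun n => (continuous_apply (Nat.unpair n).2).comp
      (continuous_subtype_val.comp (continuous_apply (Nat.unpair n).1))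
  continuous_invFun := continuous_pi fun j => by
    refine Continuous.subtype_mk ?_ _
    exact continuous_pi fun m => (continuous_apply (Nat.pair j m)).comp continuous_subtype_val

section PrefixPerm

variable {β : Type*}

def prefixOf (m : ℕ) (x : ℕ → β) : Fin m → β := fun i => x i

lemma prefixOf_eq_prefixOf_iff {m : ℕ} {x y : ℕ → β} :
    prefixOf m x = prefixOf m y ↔ EqOn x y (Iio m) :=
  ⟨fun h n hn => congrFun h ⟨n, hn⟩, fun h => funext fun i => h i.isLt⟩

def modifyPrefix (m : ℕ) (Ψ : (Fin m → β) → Fin m → β) (x : ℕ → β) : ℕ → β :=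
  fun n => if h : n < m then Ψ (prefixOf m x) ⟨n, h⟩ else x n

variable {m n : ℕ} {Ψ Φ : (Fin m → β) → Fin m → β}

lemma modifyPrefix_of_lt (x : ℕ → β) (h : n < m) :
    modifyPrefix m Ψ x n = Ψ (prefixOf m x) ⟨n, h⟩ :=
  dif_pos h

lemma modifyPrefix_of_le (x : ℕ → β) (h : m ≤ n) : modifyPrefix m Ψ x n = x n :=
  dif_neg h.not_gt

lemma prefixOf_modifyPrefix (x : ℕ → β) :
    prefixOf m (modifyPrefix m Ψ x) = Ψ (prefixOf m x) :=
  funext fun i => modifyPrefix_of_lt x i.isLt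

lemma modifyPrefix_modifyPrefix (h : ∀ v, Φ (Ψ v) = v) (x : ℕ → β) :
    modifyPrefix m Φ (modifyPrefix m Ψ x) = x := by
  funext n
  rcases lt_or_ge n m with hn | hn
  · rw [modifyPrefix_of_lt _ hn, prefixOf_modifyPrefix, h]
    rfl
  · rw [modifyPrefix_of_le _ hn, modifyPrefix_of_le _ hn]

lemma eqOn_modifyPrefix {x y : ℕ → β} (h : EqOn x y (Iio m)) :
    EqOn (modifyPrefix m Ψ x) (modifyPrefix m Ψ y) (Iio m) := fun n hn => by
  rw [modifyPrefix_of_lt _ hn, modifyPrefix_of_lt _ hn, prefixOf_eq_prefixOf_iff.2 h]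

def restrictPrefix (S : Set ℕ) (v : Fin m → β) : {i : Fin m // (i : ℕ) ∈ S} → β := fun i => v i

lemma modifyPrefix_of_restrictPrefix {S : Set ℕ}
    (hΨ : ∀ v, restrictPrefix S (Ψ v) = restrictPrefix S v) (x : ℕ → β) (hn : n ∈ S) :
    modifyPrefix m Ψ x n = x n := by
  rcases lt_or_ge n m with h | h
  · rw [modifyPrefix_of_lt _ h]
    exact congrFun (hΨ (prefixOf m x)) ⟨⟨n, h⟩, hn⟩
  · exact modifyPrefix_of_le x h

def prefixPerm (m : ℕ) (Ψ : Equiv.Perm (Fin m → β)) : Equiv.Perm (ℕ → β) where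
  toFun := modifyPrefix m Ψ
  invFun := modifyPrefix m Ψ.symm
  left_inv := modifyPrefix_modifyPrefix Ψ.symm_apply_apply
  right_inv := modifyPrefix_modifyPrefix Ψ.apply_symm_apply

lemma exists_perm_extending {V W : Type*} [DecidableEq V] (κ : V → W) (L : List (V × V))
    (hκ : ∀ pr ∈ L, κ pr.1 = κ pr.2) (h₁ : (L.map Prod.fst).Nodup) (h₂ : (L.map Prod.snd).Nodup) :
    ∃ Ψ : Equiv.Perm V, (∀ pr ∈ L, Ψ pr.1 = pr.2) ∧ ∀ v, κ (Ψ v) = κ v := by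
  induction L with
  | nil => exact ⟨1, by simp, fun _ => rfl⟩
  | cons pr₀ L ih =>
    simp only [List.map_cons, List.nodup_cons, List.mem_map] at h₁ h₂
    obtain ⟨Ψ, hΨL, hΨκ⟩ := ih (fun pr hpr => hκ pr (List.mem_cons_of_mem _ hpr)) h₁.2 h₂.2
    have hκ₀ : κ (Ψ pr₀.1) = κ pr₀.2 := (hΨκ _).trans (hκ _ List.mem_cons_self)
    refine ⟨Ψ.trans (Equiv.swap (Ψ pr₀.1) pr₀.2), fun pr hpr => ?_, fun v => ?_⟩
    · rcases List.mem_cons.1 hpr with rfl | hpr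
      · simp
      · have hne₁ : Ψ pr.1 ≠ Ψ pr₀.1 := fun h => h₁.1 ⟨pr, hpr, Ψ.injective h⟩
        have hne₂ : Ψ pr.1 ≠ pr₀.2 := fun h => h₂.1 ⟨pr, hpr, (hΨL pr hpr).symm.trans h⟩
        rw [Equiv.trans_apply, Equiv.swap_apply_of_ne_of_ne hne₁ hne₂, hΨL pr hpr]
    · rw [Equiv.trans_apply, ← hΨκ v]
      rcases eq_or_ne (Ψ v) (Ψ pr₀.1) with h | h
      · rw [h, Equiv.swap_apply_left, hκ₀]
      rcases eq_or_ne (Ψ v) pr₀.2 with h' | h'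
      · rw [h', Equiv.swap_apply_right, ← hκ₀]
      · rw [Equiv.swap_apply_of_ne_of_ne h h']

lemma exists_eq_of_eqOn_Iio (L : List (ℕ → β)) :
    ∃ N, ∀ x ∈ L, ∀ y ∈ L, EqOn x y (Iio N) → x = y := by
  classical
  refine ⟨L.toFinset.sup fun x => L.toFinset.sup fun y => firstDiff x y + 1,
    fun x hx y hy hxy => by_contra fun hne => apply_firstDiff_ne hne (hxy ?_)⟩
  have hy' := Finset.le_sup (f := fun y => firstDiff x y + 1) (List.mem_toFinset.2 hy)
  have hx' := Finset.le_sup (f := fun x => (L.toFinset.sup fun y => firstDiff x y + 1))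
    (List.mem_toFinset.2 hx)
  exact Nat.lt_of_succ_le (hy'.trans hx')

structure IsPrefixPerm (X : Set ℕ) (μ : ℕ) (σ : Equiv.Perm (ℕ → β)) : Prop where
  apply_of_le : ∀ x n, μ ≤ n → σ x n = x n
  eqOn : ∀ {x y}, EqOn x y (Iio μ) → EqOn (σ x) (σ y) (Iio μ)
  symm_eqOn : ∀ {x y}, EqOn x y (Iio μ) → EqOn (σ.symm x) (σ.symm y) (Iio μ)
  apply_of_mem : ∀ x, ∀ n ∈ X, σ x n = x n

namespace IsPrefixPerm

variable {X : Set ℕ} {μ : ℕ} {σ : Equiv.Perm (ℕ → β)}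

lemma one (X : Set ℕ) : IsPrefixPerm X 0 (1 : Equiv.Perm (ℕ → β)) :=
  ⟨fun _ _ _ => rfl, fun _ n hn => absurd hn (Nat.not_lt_zero n),
    fun _ n hn => absurd hn (Nat.not_lt_zero n), fun _ _ _ => rfl⟩

lemma symm (hσ : IsPrefixPerm X μ σ) : IsPrefixPerm X μ σ.symm where
  apply_of_le x n hn := by simpa using (hσ.apply_of_le (σ.symm x) n hn).symm
  eqOn := hσ.symm_eqOn
  symm_eqOn := hσ.eqOn
  apply_of_mem x n hn := by simpa using (hσ.apply_of_mem (σ.symm x) n hn).symm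

lemma eqOn_of_le (hσ : IsPrefixPerm X μ σ) {μ' : ℕ} (hμ : μ ≤ μ') {x y : ℕ → β}
    (hxy : EqOn x y (Iio μ')) : EqOn (σ x) (σ y) (Iio μ') := fun n hn => by
  rcases lt_or_ge n μ with h | h
  · exact hσ.eqOn (hxy.mono (Iio_subset_Iio hμ)) h
  · rw [hσ.apply_of_le x n h, hσ.apply_of_le y n h]
    exact hxy hn

lemma symm_eqOn_of_eqOn (hσ : IsPrefixPerm X μ σ) {p q : ℕ → β}
    (hpq : EqOn (σ p) q (Iio μ)) : EqOn (σ.symm q) p (Iio μ) := fun n hn => by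
  simpa using hσ.symm_eqOn hpq.symm hn

/-- The blocks of the `σ pr.1` and of the `pr.2` become pairwise distinct at a large enough
level `μ'`; the permutation of blocks matching them must fix the coordinates below `μ` and in
`X`, which is possible because `σ pr.1` and `pr.2` already agree there. -/
lemma exists_perm_matching [DecidableEq β] (hσ : IsPrefixPerm X μ σ)
    (M : List ((ℕ → β) × (ℕ → β))) (hM : ∀ pr ∈ M, EqOn (σ pr.1) pr.2 (Iio μ))
    (hMX : ∀ pr ∈ M, ∀ n ∈ X, μ ≤ n → pr.1 n = pr.2 n)
    (h₁ : (M.map Prod.fst).Nodup) (h₂ : (M.map Prod.snd).Nodup) (μ₀ : ℕ) :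
    ∃ μ', μ₀ ≤ μ' ∧ μ ≤ μ' ∧ ∃ Ψ : Equiv.Perm (Fin μ' → β),
      (∀ v, restrictPrefix (Iio μ ∪ X) (Ψ v) = restrictPrefix (Iio μ ∪ X) v) ∧
      ∀ pr ∈ M, Ψ (prefixOf μ' (σ pr.1)) = prefixOf μ' pr.2 := by
  set A₁ := (M.map Prod.fst).map σ
  set A₂ := M.map Prod.snd
  obtain ⟨N, hN⟩ := exists_eq_of_eqOn_Iio (A₁ ++ A₂)
  set μ' := max (max μ₀ μ) N
  have hsep : ∀ x ∈ A₁ ++ A₂, ∀ y ∈ A₁ ++ A₂, prefixOf μ' x = prefixOf μ' y → x = y :=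
    fun x hx y hy h =>
      hN x hx y hy ((prefixOf_eq_prefixOf_iff.1 h).mono (Iio_subset_Iio (le_max_right _ _)))
  set L := M.map fun pr => (prefixOf μ' (σ pr.1), prefixOf μ' pr.2)
  have hL : ∀ pr ∈ L, restrictPrefix (Iio μ ∪ X) pr.1 = restrictPrefix (Iio μ ∪ X) pr.2 := by
    simp only [L, List.mem_map]
    rintro _ ⟨pr, hpr, rfl⟩
    funext ⟨i, hi⟩
    show σ pr.1 i = pr.2 i
    rcases lt_or_ge (i : ℕ) μ with h | h
    · exact hM pr hpr h
    · have hiX : (i : ℕ) ∈ X := ((mem_union _ _ _).1 hi).resolve_left h.not_gt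
      rw [hσ.apply_of_mem _ _ hiX]
      exact hMX pr hpr _ hiX h
  have hL₁ : (L.map Prod.fst).Nodup := by
    have : L.map Prod.fst = A₁.map (prefixOf μ') := by simp [L, A₁]
    rw [this]
    exact (h₁.map σ.injective).map_on fun x hx y hy =>
      hsep x (List.mem_append_left _ hx) y (List.mem_append_left _ hy)
  have hL₂ : (L.map Prod.snd).Nodup := by
    have : L.map Prod.snd = A₂.map (prefixOf μ') := by simp [L, A₂]
    rw [this]
    exact h₂.map_on fun x hx y hy =>
      hsep x (List.mem_append_right _ hx) y (List.mem_append_right _ hy)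
  obtain ⟨Ψ, hΨL, hΨ⟩ := exists_perm_extending _ L hL hL₁ hL₂
  exact ⟨μ', (le_max_left _ _).trans (le_max_left _ _), (le_max_right _ _).trans (le_max_left _ _),
    Ψ, hΨ, fun pr hpr => hΨL _ (List.mem_map_of_mem hpr)⟩

lemma exists_extend [DecidableEq β] (hσ : IsPrefixPerm X μ σ) (M : List ((ℕ → β) × (ℕ → β)))
    (hM : ∀ pr ∈ M, EqOn (σ pr.1) pr.2 (Iio μ))
    (hMX : ∀ pr ∈ M, ∀ n ∈ X, μ ≤ n → pr.1 n = pr.2 n)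
    (h₁ : (M.map Prod.fst).Nodup) (h₂ : (M.map Prod.snd).Nodup) (μ₀ : ℕ) :
    ∃ μ' τ, μ₀ ≤ μ' ∧ μ ≤ μ' ∧ IsPrefixPerm X μ' τ ∧ (∀ x, EqOn (τ x) (σ x) (Iio μ)) ∧
      (∀ x, EqOn (τ.symm x) (σ.symm x) (Iio μ)) ∧ ∀ pr ∈ M, EqOn (τ pr.1) pr.2 (Iio μ') := by
  obtain ⟨μ', hμ₀, hμμ', Ψ, hΨ, hΨM⟩ := hσ.exists_perm_matching M hM hMX h₁ h₂ μ₀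
  have hΨsymm : ∀ v, restrictPrefix (Iio μ ∪ X) (Ψ.symm v) = restrictPrefix (Iio μ ∪ X) v :=
    fun v => by rw [← hΨ, Ψ.apply_symm_apply]
  refine ⟨μ', σ.trans (prefixPerm μ' Ψ), hμ₀, hμμ',
    ⟨fun x n hn => ?_, fun hxy => ?_, fun hxy => ?_, fun x n hn => ?_⟩,
    fun x n hn => ?_, fun x n hn => ?_, fun pr hpr n hn => ?_⟩
  · exact (modifyPrefix_of_le _ hn).trans (hσ.apply_of_le x n (hμμ'.trans hn))
  · exact eqOn_modifyPrefix (hσ.eqOn_of_le hμμ' hxy)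
  · exact hσ.symm.eqOn_of_le hμμ' (eqOn_modifyPrefix hxy)
  · exact (modifyPrefix_of_restrictPrefix hΨ _ (Or.inr hn)).trans (hσ.apply_of_mem x n hn)
  · exact modifyPrefix_of_restrictPrefix hΨ _ (Or.inl hn)
  · exact hσ.symm_eqOn (fun k hk => modifyPrefix_of_restrictPrefix hΨsymm _ (Or.inl hk)) hn
  · show modifyPrefix μ' Ψ (σ pr.1) n = pr.2 n
    rw [modifyPrefix_of_lt _ hn, hΨM pr hpr]
    rfl

end IsPrefixPerm

end PrefixPerm

def Realizes (D : Set (ℕ → Bool)) (X : Set ℕ) : Prop :=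
  ∀ (z : ℕ → Bool) (m : ℕ), ∃ p ∈ D, EqOn p z (Iio m) ∧ ∀ n ∈ X, m ≤ n → p n = true

/-- Each point of `A` is excluded by one coordinate outside `X`. -/
lemma exists_extension_avoiding {X : Set ℕ} (hX : Xᶜ.Infinite) (z : ℕ → Bool) (m : ℕ)
    (A : List (ℕ → Bool)) :
    ∃ z' m', m ≤ m' ∧ EqOn z' z (Iio m) ∧ (∀ n ∈ X, m ≤ n → n < m' → z' n = true) ∧
      ∀ y, EqOn y z' (Iio m') → y ∉ A := by
  induction A with
  | nil => exact ⟨z, m, le_rfl, eqOn_refl _ _, fun n _ h h' => absurd h' h.not_gt, by simp⟩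
  | cons a A ih =>
    obtain ⟨z', m', hm, hz, hzX, hzA⟩ := ih
    obtain ⟨k, hkX, hk⟩ := hX.exists_gt m'
    refine ⟨fun n => if n < m' then z' n else if n = k then !a k else true, k + 1, by omega,
      fun n hn => ?_, fun n hn hmn hnk => ?_, fun y hy => ?_⟩
    · simp only [if_pos (lt_of_lt_of_le hn hm)]
      exact hz hn
    · by_cases h : n < m'
      · simp only [if_pos h]
        exact hzX n hn hmn h
      · simp [h, show n ≠ k by rintro rfl; exact hkX hn]
    · have hyz' : EqOn y z' (Iio m') := fun n hn => by
        simpa [if_pos (mem_Iio.1 hn)] using hy (show n < k + 1 by have := mem_Iio.1 hn; omega)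
      have hyk : y k = !a k := by simpa [hk.not_gt] using hy (Nat.lt_succ_self k)
      rintro (_ | ⟨_, hyA⟩)
      · simp at hyk
      · exact hzA y hyz' hyA

lemma Realizes.exists_not_mem {D : Set (ℕ → Bool)} {X : Set ℕ} (hD : Realizes D X)
    (hX : Xᶜ.Infinite) (z : ℕ → Bool) (m : ℕ) (A : List (ℕ → Bool)) :
    ∃ p ∈ D, p ∉ A ∧ EqOn p z (Iio m) ∧ ∀ n ∈ X, m ≤ n → p n = true := by
  obtain ⟨z', m', hm, hz, hzX, hzA⟩ := exists_extension_avoiding hX z m A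
  obtain ⟨p, hpD, hpz, hpX⟩ := hD z' m'
  refine ⟨p, hpD, hzA p hpz, fun n hn => (hpz (lt_of_lt_of_le hn hm)).trans (hz hn),
    fun n hn hmn => ?_⟩
  rcases lt_or_ge n m' with h | h
  · exact (hpz h).trans (hzX n hn hmn h)
  · exact hpX n hn h

/-- A stage of the back-and-forth construction; `M` lists the pairs matched so far. -/
structure Stage where
  μ : ℕ
  σ : Equiv.Perm (ℕ → Bool)
  M : List ((ℕ → Bool) × (ℕ → Bool))

namespace Stage

def swap (S : Stage) : Stage := ⟨S.μ, S.σ.symm, S.M.map Prod.swap⟩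

lemma swap_swap (S : Stage) : S.swap.swap = S := by
  simp [swap, List.map_map]

structure IsValid (X : Set ℕ) (D E : Set (ℕ → Bool)) (S : Stage) : Prop where
  isPrefixPerm : IsPrefixPerm X S.μ S.σ
  eqOn_pair : ∀ pr ∈ S.M, EqOn (S.σ pr.1) pr.2 (Iio S.μ)
  eq_pair_of_mem : ∀ pr ∈ S.M, ∀ n ∈ X, S.μ ≤ n → pr.1 n = pr.2 n
  nodup_fst : (S.M.map Prod.fst).Nodup
  nodup_snd : (S.M.map Prod.snd).Nodup
  mem_pair : ∀ pr ∈ S.M, pr.1 ∈ D ∧ pr.2 ∈ E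

structure Extends (S S' : Stage) : Prop where
  lt : S.μ < S'.μ
  eqOn : ∀ x, EqOn (S'.σ x) (S.σ x) (Iio S.μ)
  symm_eqOn : ∀ x, EqOn (S'.σ.symm x) (S.σ.symm x) (Iio S.μ)
  subset : S.M ⊆ S'.M

lemma Extends.trans {S S' S'' : Stage} (h : S.Extends S') (h' : S'.Extends S'') :
    S.Extends S'' :=
  ⟨h.lt.trans h'.lt, fun x => (h'.eqOn x |>.mono (Iio_subset_Iio h.lt.le)).trans (h.eqOn x),
    fun x => (h'.symm_eqOn x |>.mono (Iio_subset_Iio h.lt.le)).trans (h.symm_eqOn x),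
    fun _ hpr => h'.subset (h.subset hpr)⟩

instance : IsTrans Stage Extends := ⟨fun _ _ _ => Extends.trans⟩

lemma Extends.swap {S S' : Stage} (h : S.Extends S') : S.swap.Extends S'.swap :=
  ⟨h.lt, h.symm_eqOn, h.eqOn, List.map_subset _ h.subset⟩

variable {X : Set ℕ} {D E : Set (ℕ → Bool)} {S : Stage}

lemma IsValid.swap (hS : S.IsValid X D E) : S.swap.IsValid X E D where
  isPrefixPerm := hS.isPrefixPerm.symm
  eqOn_pair := by
    simp only [Stage.swap, List.mem_map]
    rintro _ ⟨pr, hpr, rfl⟩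
    exact hS.isPrefixPerm.symm_eqOn_of_eqOn (hS.eqOn_pair pr hpr)
  eq_pair_of_mem := by
    simp only [Stage.swap, List.mem_map]
    rintro _ ⟨pr, hpr, rfl⟩ n hn hμn
    exact (hS.eq_pair_of_mem pr hpr n hn hμn).symm
  nodup_fst := by simpa [Stage.swap, List.map_map, Function.comp_def] using hS.nodup_snd
  nodup_snd := by simpa [Stage.swap, List.map_map, Function.comp_def] using hS.nodup_fst
  mem_pair := by
    simp only [Stage.swap, List.mem_map]
    rintro _ ⟨pr, hpr, rfl⟩
    exact (hS.mem_pair pr hpr).symm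

lemma isValid_zero (X : Set ℕ) (D E : Set (ℕ → Bool)) : Stage.IsValid X D E ⟨0, 1, []⟩ :=
  ⟨IsPrefixPerm.one X, by simp, by simp, List.nodup_nil, List.nodup_nil, by simp⟩

lemma IsValid.exists_extends (hS : S.IsValid X D E) (M : List ((ℕ → Bool) × (ℕ → Bool)))
    (hSM : S.M ⊆ M) (hM : ∀ pr ∈ M, EqOn (S.σ pr.1) pr.2 (Iio S.μ))
    (hMX : ∀ pr ∈ M, ∀ n ∈ X, S.μ ≤ n → pr.1 n = pr.2 n)
    (h₁ : (M.map Prod.fst).Nodup) (h₂ : (M.map Prod.snd).Nodup)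
    (hMDE : ∀ pr ∈ M, pr.1 ∈ D ∧ pr.2 ∈ E) :
    ∃ S' : Stage, S'.IsValid X D E ∧ S.Extends S' ∧ S'.M = M := by
  obtain ⟨μ', τ, hμ', hμμ', hτ, hτσ, hτσ', hτM⟩ :=
    hS.isPrefixPerm.exists_extend M hM hMX h₁ h₂ (S.μ + 1)
  exact ⟨⟨μ', τ, M⟩, ⟨hτ, hτM, fun pr hpr n hn h => hMX pr hpr n hn (hμμ'.trans h), h₁, h₂, hMDE⟩,
    ⟨hμ', hτσ, hτσ', hSM⟩, rfl⟩

/-- The partner of `p` must begin like `σ p` and, as the final homeomorphism fixes the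
coordinates in `X`, agree with `p` on `X`. -/
lemma IsValid.exists_extends_mem_fst (hS : S.IsValid X D E) (hE : Realizes E X)
    (hX : Xᶜ.Infinite) {p : ℕ → Bool} (hp : p ∈ D) (hpX : (X \ toSet p).Finite) :
    ∃ S' : Stage, S'.IsValid X D E ∧ S.Extends S' ∧ p ∈ S'.M.map Prod.fst := by
  by_cases hpM : p ∈ S.M.map Prod.fst
  · obtain ⟨S', hS', hSS', hM⟩ := hS.exists_extends S.M (List.Subset.refl _) hS.eqOn_pair
      hS.eq_pair_of_mem hS.nodup_fst hS.nodup_snd hS.mem_pair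
    exact ⟨S', hS', hSS', hM ▸ hpM⟩
  obtain ⟨N, hN⟩ := exists_forall_ge_mem_of_diff_finite hpX
  obtain ⟨q, hqE, hqM, hqp, hqX⟩ :=
    hE.exists_not_mem hX (S.σ p) (max S.μ N) (S.M.map Prod.snd)
  have hpq : EqOn (S.σ p) q (Iio S.μ) := fun n hn =>
    (hqp (mem_Iio.2 ((mem_Iio.1 hn).trans_le (le_max_left _ _)))).symm
  have hpqX : ∀ n ∈ X, S.μ ≤ n → p n = q n := fun n hn hμn => by
    rcases lt_or_ge n (max S.μ N) with h | h
    · rw [hqp h, hS.isPrefixPerm.apply_of_le p n hμn]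
    · rw [hqX n hn h, hN n ((le_max_right _ _).trans h) hn]
  obtain ⟨S', hS', hSS', hM⟩ := hS.exists_extends ((p, q) :: S.M) (List.subset_cons_self _ _)
    (List.forall_mem_cons.2 ⟨hpq, hS.eqOn_pair⟩) (List.forall_mem_cons.2 ⟨hpqX, hS.eq_pair_of_mem⟩)
    (List.nodup_cons.2 ⟨hpM, hS.nodup_fst⟩) (List.nodup_cons.2 ⟨hqM, hS.nodup_snd⟩)
    (List.forall_mem_cons.2 ⟨⟨hp, hqE⟩, hS.mem_pair⟩)
  exact ⟨S', hS', hSS', by simp [hM]⟩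

lemma IsValid.exists_extends_mem_snd (hS : S.IsValid X D E) (hD : Realizes D X)
    (hX : Xᶜ.Infinite) {q : ℕ → Bool} (hq : q ∈ E) (hqX : (X \ toSet q).Finite) :
    ∃ S' : Stage, S'.IsValid X D E ∧ S.Extends S' ∧ q ∈ S'.M.map Prod.snd := by
  obtain ⟨S', hS', hSS', hqM⟩ := hS.swap.exists_extends_mem_fst hD hX hq hqX
  refine ⟨S'.swap, hS'.swap, S.swap_swap ▸ hSS'.swap, ?_⟩
  simpa [Stage.swap, List.map_map, Function.comp_def] using hqM

end Stage

section Limit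

variable {β : Type*} {φ ψ : ℕ → (ℕ → β) → ℕ → β} {μ : ℕ → ℕ}

/-- The coordinatewise limit of maps `φ s` whose `n`-th coordinate is settled from stage `n + 1`
on. -/
def limitMap (φ : ℕ → (ℕ → β) → ℕ → β) (x : ℕ → β) : ℕ → β := fun n => φ (n + 1) x n

lemma eqOn_limitMap (hμ : StrictMono μ)
    (hφ : ∀ s t, s ≤ t → ∀ x, EqOn (φ t x) (φ s x) (Iio (μ s))) (s : ℕ) (x : ℕ → β) :
    EqOn (limitMap φ x) (φ s x) (Iio (μ s)) := fun n hn => by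
  rcases le_total (n + 1) s with h | h
  · exact (hφ _ _ h x ((Nat.lt_succ_self n).trans_le (hμ.id_le _))).symm
  · exact hφ _ _ h x hn

lemma continuous_limitMap [TopologicalSpace β] [DiscreteTopology β] (hμ : StrictMono μ)
    (hloc : ∀ s {x y}, EqOn x y (Iio (μ s)) → EqOn (φ s x) (φ s y) (Iio (μ s))) :
    Continuous (limitMap φ) := by
  refine continuous_pi fun n => IsLocallyConstant.continuous <|
    (IsLocallyConstant.iff_eventually_eq _).2 fun x => ?_
  filter_upwards [(isOpen_cylinder _ x (μ (n + 1))).mem_nhds (self_mem_cylinder x _)]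
    with y hy
  exact hloc _ hy ((Nat.lt_succ_self n).trans_le (hμ.id_le _))

lemma limitMap_limitMap (hμ : StrictMono μ)
    (hloc : ∀ s {x y}, EqOn x y (Iio (μ s)) → EqOn (φ s x) (φ s y) (Iio (μ s)))
    (hψ : ∀ s t, s ≤ t → ∀ x, EqOn (ψ t x) (ψ s x) (Iio (μ s))) (hinv : ∀ s x, φ s (ψ s x) = x)
    (x : ℕ → β) : limitMap φ (limitMap ψ x) = x := funext fun n => by
  have hn : n < μ (n + 1) := (Nat.lt_succ_self n).trans_le (hμ.id_le _)
  show φ (n + 1) (limitMap ψ x) n = x n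
  rw [hloc _ (eqOn_limitMap hμ hψ (n + 1) x) hn, hinv]

end Limit

section BackAndForth

variable {X : Set ℕ} {d e : ℕ → ℕ → Bool}

lemma exists_stage_seq (hX : Xᶜ.Infinite) (hdX : ∀ r, (X \ toSet (d r)).Finite)
    (heX : ∀ r, (X \ toSet (e r)).Finite) (hd : Realizes (range d) X)
    (he : Realizes (range e) X) :
    ∃ S : ℕ → Stage, (∀ s, (S s).IsValid X (range d) (range e)) ∧
      (∀ s t, s < t → (S s).Extends (S t)) ∧
      ∀ r, d r ∈ (S (r + 1)).M.map Prod.fst ∧ e r ∈ (S (r + 1)).M.map Prod.snd := by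
  obtain ⟨S, -, hS⟩ := exists_seq_of_forall_exists
    (⟨⟨0, 1, []⟩, Stage.isValid_zero _ _ _⟩ : {S : Stage // S.IsValid X (range d) (range e)})
    (R := fun r S S' => S.1.Extends S'.1 ∧ d r ∈ S'.1.M.map Prod.fst ∧
      e r ∈ S'.1.M.map Prod.snd) fun r S => by
    obtain ⟨S₁, hS₁, hSS₁, hd₁⟩ := S.2.exists_extends_mem_fst he hX (mem_range_self r) (hdX r)
    obtain ⟨S₂, hS₂, hS₁S₂, he₂⟩ := hS₁.exists_extends_mem_snd hd hX (mem_range_self r) (heX r)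
    exact ⟨⟨S₂, hS₂⟩, hSS₁.trans hS₁S₂, List.map_subset _ hS₁S₂.subset hd₁, he₂⟩
  exact ⟨fun s => (S s).1, fun s => (S s).2,
    Nat.rel_of_forall_rel_succ_of_lt Stage.Extends fun s => (hS s).1, fun r => (hS r).2⟩

theorem exists_homeomorph_image_range_eq (hX : Xᶜ.Infinite)
    (hdX : ∀ r, (X \ toSet (d r)).Finite) (heX : ∀ r, (X \ toSet (e r)).Finite)
    (hd : Realizes (range d) X) (he : Realizes (range e) X) :
    ∃ h : (ℕ → Bool) ≃ₜ (ℕ → Bool), (∀ x, EqOn (h x) x X) ∧ h '' range d = range e := by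
  obtain ⟨S, hS, hSS, hde⟩ := exists_stage_seq hX hdX heX hd he
  have hμ : StrictMono fun s => (S s).μ := fun s t hst => (hSS s t hst).lt
  have hcoh : ∀ s t, s ≤ t → ∀ x, EqOn ((S t).σ x) ((S s).σ x) (Iio (S s).μ) := fun s t hst x =>
    hst.eq_or_lt.elim (fun h => h ▸ eqOn_refl _ _) fun h => (hSS s t h).eqOn x
  have hcoh' : ∀ s t, s ≤ t → ∀ x, EqOn ((S t).σ.symm x) ((S s).σ.symm x) (Iio (S s).μ) :=
    fun s t hst x => hst.eq_or_lt.elim (fun h => h ▸ eqOn_refl _ _) fun h => (hSS s t h).symm_eqOn x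
  let h : (ℕ → Bool) ≃ₜ (ℕ → Bool) :=
    { toFun := limitMap fun s => (S s).σ
      invFun := limitMap fun s => (S s).σ.symm
      left_inv := limitMap_limitMap hμ (fun s => (hS s).isPrefixPerm.symm_eqOn) hcoh
        fun s => (S s).σ.symm_apply_apply
      right_inv := limitMap_limitMap hμ (fun s => (hS s).isPrefixPerm.eqOn) hcoh'
        fun s => (S s).σ.apply_symm_apply
      continuous_toFun := continuous_limitMap hμ fun s => (hS s).isPrefixPerm.eqOn
      continuous_invFun := continuous_limitMap hμ fun s => (hS s).isPrefixPerm.symm_eqOn }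
  have hpair : ∀ s, ∀ pr ∈ (S s).M, h pr.1 = pr.2 := fun s pr hpr => funext fun n => by
    have hn : n < (S (s + n + 1)).μ := (by omega : n < s + n + 1).trans_le (hμ.id_le _)
    exact (eqOn_limitMap hμ hcoh _ pr.1 hn).trans
      ((hS _).eqOn_pair pr ((hSS s _ (by omega)).subset hpr) hn)
  refine ⟨h, fun x n hn => (hS (n + 1)).isPrefixPerm.apply_of_mem x n hn, ?_⟩
  apply Subset.antisymm
  · rintro _ ⟨_, ⟨r, rfl⟩, rfl⟩
    obtain ⟨pr, hpr, hpr₁⟩ := List.mem_map.1 (hde r).1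
    exact hpr₁ ▸ hpair _ pr hpr ▸ ((hS _).mem_pair pr hpr).2
  · rintro _ ⟨r, rfl⟩
    obtain ⟨pr, hpr, hpr₂⟩ := List.mem_map.1 (hde r).2
    exact ⟨pr.1, ((hS _).mem_pair pr hpr).1, hpr₂ ▸ hpair _ pr hpr⟩

end BackAndForth

lemma Realizes.mono {D : Set (ℕ → Bool)} {X Y : Set ℕ} (hD : Realizes D X) (hYX : Y ⊆ X) :
    Realizes D Y := fun z m =>
  let ⟨p, hp, hpz, hpX⟩ := hD z m
  ⟨p, hp, hpz, fun n hn => hpX n (hYX hn)⟩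

def padTrue (t : List Bool) : ℕ → Bool := fun n => t.getD n true

lemma padTrue_of_le {t : List Bool} {n : ℕ} (h : t.length ≤ n) : padTrue t n = true :=
  List.getD_eq_default _ _ h

lemma eqOn_padTrue_ofFn (z : ℕ → Bool) (m : ℕ) :
    EqOn (padTrue (List.ofFn fun i : Fin m => z i)) z (Iio m) := fun n hn => by
  simp [padTrue, List.getD_eq_getElem?_getD, mem_Iio.1 hn]

/-- Some `η (t, L) ∈ D` begins with the pattern `t` followed by `true`s up to `L`. Take `Y ∈ G`
almost inside all of them and `Z ∈ G` missing infinitely many intervals `[b p, b (p + 1))` of a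
partition growing faster than the moduli of these almost-inclusions. For such a gap `p`,
`η (t, b p)` is `true` on `X = Z ∩ Y` up to `b p`, `X` has no point in the gap, and `η (t, b p)`
contains `X` beyond it. -/
theorem exists_realizes {G : Set (Set ℕ)} (hG : IsFilterOn G) (hFr : ExtendsFrechet G)
    (hP : IsPFilterOn G) (hgap : HasIntervalGaps G) {D : Set (ℕ → Bool)}
    (hDG : ∀ p ∈ D, toSet p ∈ G) (hD : ∀ z, toSet z ∈ G → ∀ m, ∃ p ∈ D, EqOn p z (Iio m)) :
    ∃ X ∈ G, Xᶜ.Infinite ∧ Realizes D X := by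
  have hpadG : ∀ t, toSet (padTrue t) ∈ G := fun t => hFr _ <| (finite_Iio t.length).subset
    fun n hn => mem_Iio.2 (lt_of_not_ge fun h => hn (padTrue_of_le h))
  choose η hηD hη using fun tL : List Bool × ℕ => hD (padTrue tL.1) (hpadG tL.1) tL.2
  obtain ⟨Y, hY, hYη⟩ := hP.exists_diff_finite fun tL => hDG _ (hηD tL)
  choose M hM using fun tL => exists_forall_ge_mem_of_diff_finite (hYη tL)
  obtain ⟨pattern, hpattern⟩ := exists_surjective_nat (List Bool)
  obtain ⟨b, -, hb⟩ := exists_seq_of_forall_exists 0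
    (R := fun p x y => x < y ∧ ∀ i ≤ p, M (pattern i, x) ≤ y) fun p x => by
    obtain ⟨c, hc⟩ := ((finite_Iic p).image fun i => M (pattern i, x)).bddAbove
    exact ⟨max (x + 1) c, by omega, fun i hi => (hc ⟨i, hi, rfl⟩).trans (le_max_right _ _)⟩
  have hbm : StrictMono b := strictMono_nat_of_lt_succ fun p => (hb p).1
  obtain ⟨Z, hZ, hgaps⟩ := hgap b hbm
  refine ⟨Z ∩ Y, hG.inter_mem hZ hY, (hgaps.image hbm.injective.injOn).mono ?_, fun z m => ?_⟩
  · rintro _ ⟨p, hp, rfl⟩ ⟨hpZ, -⟩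
    exact Set.disjoint_left.1 hp hpZ ⟨le_rfl, hbm (Nat.lt_succ_self p)⟩
  obtain ⟨i, hi⟩ := hpattern (List.ofFn fun i : Fin m => z i)
  obtain ⟨p, hp, hip⟩ := hgaps.exists_gt (max i m)
  have hmp : m ≤ b p := ((le_max_right i m).trans hip.le).trans (hbm.id_le p)
  refine ⟨η (pattern i, b p), hηD _, fun n hn => ?_, fun n ⟨hnZ, hnY⟩ hmn => ?_⟩
  · rw [hη (pattern i, b p) (mem_Iio.2 ((mem_Iio.1 hn).trans_le hmp)), hi]
    exact eqOn_padTrue_ofFn z m hn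
  rcases lt_or_ge n (b p) with h | h
  · rw [hη _ h]
    exact padTrue_of_le (by simpa [hi] using hmn)
  rcases lt_or_ge n (b (p + 1)) with h' | h'
  · exact absurd ⟨h, h'⟩ (Set.disjoint_left.1 hp hnZ)
  · exact hM _ n (((hb p).2 i (by omega)).trans h') hnY

lemma _root_.Dense.exists_eqOn_Iio {β : Type*} [TopologicalSpace β] [DiscreteTopology β]
    {s : Set (ℕ → β)} {D : Set s} (hD : Dense D) {z : ℕ → β} (hz : z ∈ s) (m : ℕ) :
    ∃ w ∈ D, EqOn (w : ℕ → β) z (Iio m) := by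
  obtain ⟨w, hw, hwD⟩ := hD.inter_open_nonempty _
    ((isOpen_cylinder _ z m).preimage continuous_subtype_val)
    ⟨⟨z, hz⟩, self_mem_cylinder z m⟩
  exact ⟨w, hwD, hw⟩

theorem cdh_of_hasIntervalGaps {G : Set (Set ℕ)} (hG : IsFilterOn G) (hFr : ExtendsFrechet G)
    (hP : IsPFilterOn G) (hgap : HasIntervalGaps G) : CDH (cantorCopy G) := by
  intro D E hD hDd hE hEd
  have : Nonempty (cantorCopy G) := ⟨⟨fun _ => true, hG.mem_of_superset hG.1 fun _ _ => rfl⟩⟩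
  obtain ⟨d, rfl⟩ := hD.exists_eq_range hDd.nonempty
  obtain ⟨e, rfl⟩ := hE.exists_eq_range hEd.nonempty
  have hreal : ∀ f : ℕ → cantorCopy G, Dense (range f) →
      ∃ X ∈ G, Xᶜ.Infinite ∧ Realizes (range (Subtype.val ∘ f)) X := fun f hf =>
    exists_realizes hG hFr hP hgap (by rintro _ ⟨r, rfl⟩; exact (f r).2) fun z hz m => by
      obtain ⟨_, ⟨r, rfl⟩, hr⟩ := hf.exists_eqOn_Iio hz m
      exact ⟨_, mem_range_self r, hr⟩
  obtain ⟨Xd, hXdG, hXdc, hXd⟩ := hreal d hDd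
  obtain ⟨Xe, hXeG, -, hXe⟩ := hreal e hEd
  obtain ⟨Y, hY, hYde⟩ := hP (fun r => toSet (d r).1 ∩ toSet (e r).1)
    fun r => hG.inter_mem (d r).2 (e r).2
  obtain ⟨h, hhX, hhde⟩ := exists_homeomorph_image_range_eq (X := Xd ∩ Xe ∩ Y)
    (hXdc.mono (compl_subset_compl.2 (inter_subset_left.trans inter_subset_left)))
    (fun r => (hYde r).subset (sdiff_subset_sdiff inter_subset_right inter_subset_left))
    (fun r => (hYde r).subset (sdiff_subset_sdiff inter_subset_right inter_subset_right))
    (hXd.mono (inter_subset_left.trans inter_subset_left))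
    (hXe.mono (inter_subset_left.trans inter_subset_right))
  have hXG : Xd ∩ Xe ∩ Y ∈ G := hG.inter_mem (hG.inter_mem hXdG hXeG) hY
  have hhG : ∀ x, x ∈ cantorCopy G ↔ h x ∈ cantorCopy G := fun x =>
    ⟨hG.toSet_mem_of_eqOn hXG (hhX x).symm, hG.toSet_mem_of_eqOn hXG (hhX x)⟩
  refine ⟨h.subtype hhG, Subtype.val_injective.image_injective ?_⟩
  rw [← image_comp, show Subtype.val ∘ h.subtype hhG = h ∘ Subtype.val from rfl, image_comp,
    ← range_comp Subtype.val d, ← range_comp Subtype.val e]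
  exact hhde

end FilterCDH

/-- If `F` is a non-meager P-filter on `ω` extending the Fréchet filter, then the
countable power `F^ω` is countable dense homogeneous. -/
theorem stmt1 (F : Set (Set ℕ)) (hF : IsFilterOn F) (hFr : ExtendsFrechet F)
    (hP : IsPFilterOn F) (hNM : NonMeagerFamily F) :
    CDH (ℕ → ↥(cantorCopy F)) :=
  (FilterCDH.cdh_of_hasIntervalGaps hF.countablePower hFr.countablePower
    (hP.countablePower hF hFr) (hNM.hasIntervalGaps.countablePower hF hFr)).of_homeomorph
    (FilterCDH.powerHomeomorph F).symm
end

section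
/- Let F be a filter on ω extending the Fréchet filter, viewed as a subspace of the Cantor space 2^ω. If F is countable dense homogeneous, then F is a non-meager subset of 2^ω. -/
open Set

/-!
If `F` is meagre then, being dense in `2^ω`, it is meagre in itself, so it is covered by an
increasing sequence of closed sets `Cₙ` with empty interior; picking the `n`-th point in the
`n`-th basic open set but outside `Cₙ` gives a countable dense set meeting every `Cₙ` in a finite
set, and by CDH every countable dense subset of `F` is thin in this sense for some closed cover.
If `F` contains a coinfinite set `A`, the compact set `{B | A ⊆ B} ⊆ F` has no isolated points,
and its countably many cofinite members are dense in it. Adding them to a dense set, Baire's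
theorem on this compact set puts a relatively open piece of it inside one member of the cover,
and that piece contains infinitely many of them: a contradiction. Otherwise `F` is the Fréchet
filter, a countable space without isolated points, whereas a countable CDH space is discrete
(`X \ {x}` is dense when `x` is not isolated).
-/

open Topology TopologicalSpace

section CountableDenseHomogeneous

variable {X : Type*} [TopologicalSpace X]

lemma isMeagre_univ_of_dense {s : Set X} (hs : Dense s) (h : IsMeagre s) :
    IsMeagre (univ : Set s) := by
  obtain ⟨S, hSo, hSd, hSc, hSs⟩ := mem_residual_iff.mp h
  refine mem_residual_iff.mpr ⟨preimage Subtype.val '' S, ?_, ?_, hSc.image _, ?_⟩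
  · rintro _ ⟨t, ht, rfl⟩
    exact (hSo t ht).preimage continuous_subtype_val
  · rintro _ ⟨t, ht, rfl⟩
    rw [Subtype.dense_iff, Subtype.image_preimage_coe, (hs.inter_of_isOpen_right (hSd t ht)
      (hSo t ht)).closure_eq]
    exact subset_univ s
  · rw [sInter_image, ← preimage_iInter₂, ← sInter_eq_biInter, compl_univ]
    exact fun x hx => hSs hx x.2

lemma exists_closed_cover_of_isMeagre_univ (h : IsMeagre (univ : Set X)) :
    ∃ C : ℕ → Set X, (∀ n, IsClosed (C n)) ∧ (∀ n, interior (C n) = ∅) ∧ ⋃ n, C n = univ := by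
  obtain ⟨S, hSnd, hSc, hcov⟩ := isMeagre_iff_countable_union_isNowhereDense.mp h
  obtain ⟨C, hC⟩ := ((hSc.image closure).insert ∅).exists_eq_range (insert_nonempty _ _)
  have hmem (n : ℕ) : C n = ∅ ∨ ∃ t ∈ S, closure t = C n :=
    (hC ▸ mem_range_self n : C n ∈ insert ∅ (closure '' S))
  refine ⟨C, fun n => ?_, fun n => ?_, univ_subset_iff.mp ?_⟩
  · rcases hmem n with h | ⟨t, -, ht⟩
    · exact h ▸ isClosed_empty
    · exact ht ▸ isClosed_closure
  · rcases hmem n with h | ⟨t, htS, ht⟩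
    · rw [h, interior_empty]
    · exact ht ▸ hSnd t htS
  · rw [← sUnion_range, ← hC]
    exact hcov.trans ((sUnion_mono_subsets fun _ => subset_closure).trans
      (sUnion_mono (subset_insert _ _)))

lemma isClosed_accumulate {C : ℕ → Set X} (hC : ∀ n, IsClosed (C n)) (n : ℕ) :
    IsClosed (accumulate C n) :=
  (finite_le_nat n).isClosed_biUnion fun k _ => hC k

lemma interior_accumulate_eq_empty {C : ℕ → Set X} (hC : ∀ n, IsClosed (C n))
    (hint : ∀ n, interior (C n) = ∅) (n : ℕ) : interior (accumulate C n) = ∅ := by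
  induction n with
  | zero => rw [accumulate_zero_nat, hint 0]
  | succ n ih =>
    rw [accumulate_succ, interior_union_isClosed_of_interior_empty (isClosed_accumulate hC n)
      (hint _), ih]

lemma exists_countable_dense_finite_inter_of_monotone [SecondCountableTopology X] [Nonempty X]
    {C : ℕ → Set X} (hmono : Monotone C) (hint : ∀ n, interior (C n) = ∅) :
    ∃ D : Set X, D.Countable ∧ Dense D ∧ ∀ n, (D ∩ C n).Finite := by
  obtain ⟨b, hbc, hbempty, hb⟩ := exists_countable_basis X
  obtain ⟨v, hv, -⟩ := hb.exists_subset_of_mem_open (mem_univ (Classical.arbitrary X)) isOpen_univ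
  obtain ⟨e, rfl⟩ := hbc.exists_eq_range ⟨v, hv⟩
  have hescape (n : ℕ) : (e n \ C n).Nonempty :=
    (interior_eq_empty_iff_dense_compl.mp (hint n)).inter_open_nonempty _
      (hb.isOpen (mem_range_self n))
      (nonempty_iff_ne_empty.mpr fun h => hbempty (h ▸ mem_range_self n))
  choose d hd using hescape
  refine ⟨range d, countable_range d, hb.dense_iff.mpr ?_, fun N => ?_⟩
  · rintro _ ⟨n, rfl⟩ -
    exact ⟨d n, (hd n).1, mem_range_self n⟩
  · refine ((finite_lt_nat N).image d).subset ?_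
    rintro _ ⟨⟨k, rfl⟩, hk⟩
    exact mem_image_of_mem d (lt_of_not_ge fun hNk => (hd k).2 (hmono hNk hk))

lemma CDH.exists_closed_cover_finite_inter [SecondCountableTopology X] [Nonempty X] (hX : CDH X)
    (h : IsMeagre (univ : Set X)) {E : Set X} (hEc : E.Countable) (hEd : Dense E) :
    ∃ C : ℕ → Set X, (∀ n, IsClosed (C n)) ∧ ⋃ n, C n = univ ∧ ∀ n, (E ∩ C n).Finite := by
  obtain ⟨C, hCc, hCint, hCcov⟩ := exists_closed_cover_of_isMeagre_univ h
  obtain ⟨D, hDc, hDd, hDC⟩ := exists_countable_dense_finite_inter_of_monotone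
    monotone_accumulate (interior_accumulate_eq_empty hCc hCint)
  obtain ⟨φ, hφ⟩ := hX D E hDc hDd hEc hEd
  refine ⟨fun n => φ '' accumulate C n, fun n => φ.isClosedMap _ (isClosed_accumulate hCc n),
    ?_, fun n => ?_⟩
  · rw [← image_iUnion, iUnion_accumulate, hCcov, image_univ, φ.surjective.range_eq]
  · rw [← hφ, ← image_inter φ.injective]
    exact (hDC n).image φ

lemma IsCompact.exists_isOpen_inter_subset_of_subset_iUnion [T2Space X] {K : Set X}
    (hK : IsCompact K) (hKne : K.Nonempty) {ι : Type*} [Countable ι] {C : ι → Set X}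
    (hC : ∀ i, IsClosed (C i)) (hcov : K ⊆ ⋃ i, C i) :
    ∃ i, ∃ U, IsOpen U ∧ (U ∩ K).Nonempty ∧ U ∩ K ⊆ C i := by
  have : CompactSpace K := isCompact_iff_compactSpace.mp hK
  have : Nonempty K := hKne.to_subtype
  obtain ⟨i, z, hz⟩ := nonempty_interior_of_iUnion_of_closed
    (fun i => (hC i).preimage continuous_subtype_val (f := ((↑) : K → X)))
    (by simpa [← preimage_iUnion, eq_univ_iff_forall] using fun x hx => hcov hx)
  obtain ⟨U, hU, hUint⟩ := isOpen_induced_iff.mp (isOpen_interior (s := ((↑) : K → X) ⁻¹' C i))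
  refine ⟨i, U, hU, ⟨z, ?_, z.2⟩, fun y ⟨hyU, hyK⟩ => ?_⟩
  · exact (hUint ▸ hz : z ∈ (↑) ⁻¹' U)
  · have hy : (⟨y, hyK⟩ : K) ∈ (↑) ⁻¹' U := hyU
    rw [hUint] at hy
    exact interior_subset (s := ((↑) : K → X) ⁻¹' C i) hy

theorem CDH.not_isMeagre_univ [T2Space X] [SecondCountableTopology X] (hX : CDH X)
    {K Q : Set X} (hK : IsCompact K) (hKne : K.Nonempty) (hQc : Q.Countable) (hQK : Q ⊆ K)
    (hQ : ∀ U, IsOpen U → (U ∩ K).Nonempty → (U ∩ Q).Infinite) :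
    ¬ IsMeagre (univ : Set X) := by
  intro h
  have : Nonempty X := hKne.to_subtype.map Subtype.val
  obtain ⟨D, hDc, hDd⟩ := exists_countable_dense X
  obtain ⟨C, hCc, hCcov, hEC⟩ :=
    hX.exists_closed_cover_finite_inter h (hDc.union hQc) (hDd.mono subset_union_left)
  obtain ⟨n, U, hU, hUK, hUKC⟩ :=
    hK.exists_isOpen_inter_subset_of_subset_iUnion hKne hCc (hCcov ▸ subset_univ K)
  exact hQ U hU hUK ((hEC n).subset fun x hx => ⟨Or.inr hx.2, hUKC ⟨hx.1, hQK hx.2⟩⟩)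

lemma CDH.discreteTopology_of_countable [Countable X] (hX : CDH X) : DiscreteTopology X := by
  refine discreteTopology_iff_isOpen_singleton.mpr fun x => ?_
  by_contra hx
  obtain ⟨φ, hφ⟩ := hX univ {x}ᶜ countable_univ dense_univ (to_countable _)
    (dense_compl_singleton_iff_not_open.mpr hx)
  rw [image_univ, φ.surjective.range_eq] at hφ
  exact (hφ ▸ mem_univ x : x ∈ ({x}ᶜ : Set X)) rfl

end CountableDenseHomogeneous

section CantorSpace

variable {α : Type*}

def cofinitePoints (α : Type*) : Set (α → Bool) := cantorCopy {s | sᶜ.Finite}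

lemma countable_cofinitePoints [Countable α] : (cofinitePoints α).Countable := by
  refine Countable.ofPred_finite.preimage (f := fun y => (toSet y)ᶜ)
    fun y z hyz => funext fun a => ?_
  have : a ∈ toSet y ↔ a ∈ toSet z := by rw [compl_inj_iff.mp hyz]
  exact Bool.eq_iff_iff.mpr this

lemma isClosed_cantorCopy_Ici (A : Set α) : IsClosed (cantorCopy (Ici A)) := by
  have : cantorCopy (Ici A) = ⋂ a ∈ A, {y | y a = true} := by
    ext y
    simp [cantorCopy, toSet, subset_def]
  rw [this]
  exact isClosed_biInter fun a _ => isClosed_eq (continuous_apply a) continuous_const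

/-- The witnesses agree with `y₀` on the finitely many coordinates that pin down a basic
neighbourhood of `y₀` inside `U`, and elsewhere are `true` except at one coordinate `m ∉ A`. -/
lemma IsOpen.infinite_inter_cantorCopy_Ici_inter_cofinitePoints {U : Set (α → Bool)}
    (hU : IsOpen U) {A : Set α} (hA : Aᶜ.Infinite) {y₀ : α → Bool} (hy₀U : y₀ ∈ U)
    (hy₀A : A ⊆ toSet y₀) : (U ∩ cantorCopy (Ici A) ∩ cofinitePoints α).Infinite := by
  classical
  obtain ⟨I, u, hIu, hIU⟩ := isOpen_pi_iff.mp hU y₀ hy₀U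
  let y (m : α) : α → Bool := fun a => if a ∈ I then y₀ a else decide (a ≠ m)
  have hy (m : α) (hm : m ∈ Aᶜ \ I) : y m ∈ U ∩ cantorCopy (Ici A) ∩ cofinitePoints α := by
    refine ⟨⟨hIU fun a ha => ?_, fun a ha => ?_⟩, ?_⟩
    · simpa [y, Finset.mem_coe.mp ha] using (hIu a ha).2
    · by_cases haI : a ∈ I
      · simpa [toSet, y, haI] using hy₀A ha
      · simpa [toSet, y, haI] using ne_of_mem_of_not_mem ha hm.1
    · refine (I.finite_toSet.union (finite_singleton m)).subset fun a ha => ?_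
      by_contra h
      simp_all [toSet, y]
  have hinj : InjOn y (Aᶜ \ I) := by
    intro m hm m' _ hmm'
    by_contra hne
    have hmI : m ∉ I := hm.2
    have := congrFun hmm' m
    simp [y, hmI, hne] at this
  exact ((hA.sdiff I.finite_toSet).image hinj).mono (image_subset_iff.mpr hy)

lemma IsOpen.infinite_inter_cofinitePoints [Infinite α] {U : Set (α → Bool)} (hU : IsOpen U)
    (hne : U.Nonempty) : (U ∩ cofinitePoints α).Infinite := by
  obtain ⟨y₀, hy₀⟩ := hne
  refine (hU.infinite_inter_cantorCopy_Ici_inter_cofinitePoints ?_ hy₀ (empty_subset _)).mono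
    fun y hy => ⟨hy.1.1, hy.2⟩
  rw [compl_empty]
  exact infinite_univ

lemma dense_cofinitePoints [Infinite α] : Dense (cofinitePoints α) :=
  dense_iff_inter_open.mpr fun _ hU hne => (hU.infinite_inter_cofinitePoints hne).nonempty

lemma not_isOpen_singleton_cantorCopy [Infinite α] {F : Set (Set α)} (hFr : ExtendsFrechet F)
    (x : cantorCopy F) : ¬ IsOpen ({x} : Set (cantorCopy F)) := by
  intro hx
  obtain ⟨U, hU, hUx⟩ := isOpen_induced_iff.mp hx
  have hxU : x.1 ∈ U := (hUx ▸ mem_singleton x : x ∈ (↑) ⁻¹' U)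
  refine (hU.infinite_inter_cofinitePoints ⟨x, hxU⟩).not_finite
    ((finite_singleton x.1).subset fun y hy => ?_)
  have hy' : (⟨y, hFr _ hy.2⟩ : cantorCopy F) ∈ (↑) ⁻¹' U := hy.1
  rw [hUx] at hy'
  exact congrArg Subtype.val hy'

lemma nonMeagerFamily_of_cdh_of_coinfinite_mem [Countable α] {F : Set (Set α)} {A : Set α}
    (hAF : Ici A ⊆ F) (hA : Aᶜ.Infinite) (hFr : ExtendsFrechet F) (hCDH : CDH (cantorCopy F)) :
    NonMeagerFamily F := by
  have : Infinite α := infinite_univ_iff.mp (hA.mono (subset_univ _))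
  intro hM
  have hAF' : cantorCopy (Ici A) ⊆ cantorCopy F := preimage_mono hAF
  have htrue : (fun _ => true) ∈ cantorCopy (Ici A) := fun _ _ => rfl
  refine hCDH.not_isMeagre_univ (K := ((↑) : cantorCopy F → α → Bool) ⁻¹' cantorCopy (Ici A))
    (Q := (↑) ⁻¹' (cantorCopy (Ici A) ∩ cofinitePoints α)) ?_ ⟨⟨_, hAF' htrue⟩, htrue⟩
    ((countable_cofinitePoints.mono inter_subset_right).preimage Subtype.val_injective)
    (preimage_mono inter_subset_left) ?_
    (isMeagre_univ_of_dense (dense_cofinitePoints.mono fun y hy => hFr _ hy) hM)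
  · rw [Subtype.isCompact_iff, Subtype.image_preimage_coe, inter_eq_right.mpr hAF']
    exact (isClosed_cantorCopy_Ici A).isCompact
  · rintro _ hU ⟨y₀, hy₀U, hy₀A⟩
    obtain ⟨W, hW, rfl⟩ := isOpen_induced_iff.mp hU
    rw [← preimage_inter, ← inter_assoc]
    exact (hW.infinite_inter_cantorCopy_Ici_inter_cofinitePoints hA hy₀U hy₀A).preimage
      fun y hy => ⟨⟨y, hFr _ hy.2⟩, rfl⟩

lemma not_cdh_cantorCopy_of_subset_cofinite [Countable α] [Infinite α] {F : Set (Set α)}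
    (hFr : ExtendsFrechet F) (hF : ∀ A ∈ F, Aᶜ.Finite) : ¬ CDH (cantorCopy F) := by
  intro hCDH
  have hsub : cantorCopy F ⊆ cofinitePoints α := fun y hy => hF _ hy
  have : Countable (cantorCopy F) := (countable_cofinitePoints.mono hsub).to_subtype
  have := hCDH.discreteTopology_of_countable
  exact not_isOpen_singleton_cantorCopy hFr ⟨fun _ => true, hFr _ (by simp [toSet])⟩
    (isOpen_discrete _)

end CantorSpace

/-- If a filter `F` on `ω` extending the Fréchet filter is countable dense homogeneous
(as a subspace of the Cantor space), then `F` is non-meager. -/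
theorem stmt2 (F : Set (Set ℕ)) (hF : IsFilterOn F) (hFr : ExtendsFrechet F)
    (hCDH : CDH ↥(cantorCopy F)) :
    NonMeagerFamily F := by
  by_cases hA : ∃ A ∈ F, Aᶜ.Infinite
  · obtain ⟨A, hAF, hA⟩ := hA
    exact nonMeagerFamily_of_cdh_of_coinfinite_mem (fun B hB => hF.2.2.2 A B hAF hB) hA hFr hCDH
  · push Not at hA
    exact absurd hCDH (not_cdh_cantorCopy_of_subset_cofinite hFr hA)
end

section
/- Let F be a filter on ω extending the Fréchet filter, viewed as a subspace of the Cantor space 2^ω. If the countable power F^ω (with the product topology) is countable dense homogeneous, then F is a non-meager subset of 2^ω. -/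
open Set

open Filter Topology

section Helpers
variable {α β : Type*} [TopologicalSpace α] [TopologicalSpace β]

lemma isGδ_preimage' {f : α → β} (hf : Continuous f) {s : Set β} (hs : IsGδ s) :
    IsGδ (f ⁻¹' s) := by
  obtain ⟨T, hTo, hTc, rfl⟩ := hs
  rw [Set.preimage_sInter]
  exact IsGδ.biInter hTc fun t ht => ((hTo t ht).preimage hf).isGδ

lemma nwd_preimage {f : α → β} (hc : Continuous f) (ho : IsOpenMap f) {s : Set β}
    (hs : IsNowhereDense s) : IsNowhereDense (f ⁻¹' s) := by
  rw [IsNowhereDense, Set.eq_empty_iff_forall_notMem]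
  intro x hx
  have h1 : x ∈ interior (f ⁻¹' closure s) :=
    interior_mono (hc.closure_preimage_subset s) hx
  have h2 : f '' interior (f ⁻¹' closure s) ⊆ interior (closure s) :=
    interior_maximal (by rw [Set.image_subset_iff]; exact interior_subset)
      (ho _ isOpen_interior)
  have h3 := h2 ⟨x, h1, rfl⟩
  rw [hs] at h3
  exact h3

lemma meagre_preimage {f : α → β} (hc : Continuous f) (ho : IsOpenMap f) {s : Set β}
    (hs : IsMeagre s) : IsMeagre (f ⁻¹' s) := by
  rw [isMeagre_iff_countable_union_isNowhereDense] at hs ⊢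
  obtain ⟨S, hS, hSc, hsub⟩ := hs
  refine ⟨(fun t => f ⁻¹' t) '' S, ?_, hSc.image _, ?_⟩
  · rintro t ⟨u, hu, rfl⟩; exact nwd_preimage hc ho (hS u hu)
  · intro x hx
    obtain ⟨t, ht, hxt⟩ := hsub hx
    exact ⟨f ⁻¹' t, ⟨t, ht, rfl⟩, hxt⟩

lemma nwd_subtype {S : Set α} (hd : Dense S) {N : Set α} (hN : IsNowhereDense N) :
    IsNowhereDense ((Subtype.val : ↥S → α) ⁻¹' N) := by
  have hcl : closure ((Subtype.val : ↥S → α) ⁻¹' N) ⊆ Subtype.val ⁻¹' closure N := by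
    intro x hx
    rw [closure_subtype] at hx
    exact closure_mono (Set.image_preimage_subset _ _) hx
  rw [IsNowhereDense, Set.eq_empty_iff_forall_notMem]
  intro x hx
  have hx2 : x ∈ interior ((Subtype.val : ↥S → α) ⁻¹' closure N) := interior_mono hcl hx
  rw [mem_interior_iff_mem_nhds, nhds_subtype, Filter.mem_comap] at hx2
  obtain ⟨W, hW, hWsub⟩ := hx2
  have hxW : (x : α) ∈ interior W := mem_interior_iff_mem_nhds.mpr hW
  have hVsub : interior W ⊆ closure N := by
    intro w hw
    by_contra hw'
    obtain ⟨s, hsS, hsV⟩ := hd.exists_mem_open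
      (isOpen_interior.inter isClosed_closure.isOpen_compl) ⟨w, hw, hw'⟩
    have hmem : (⟨s, hsS⟩ : ↥S) ∈ (Subtype.val : ↥S → α) ⁻¹' W :=
      Set.mem_preimage.mpr (interior_subset hsV.1)
    exact hsV.2 (Set.mem_preimage.mp (hWsub hmem))
  have hfin : (x : α) ∈ interior (closure N) :=
    interior_maximal hVsub isOpen_interior hxW
  rw [hN] at hfin
  exact hfin

lemma meagre_univ_of_dense_meagre {S : Set α} (hd : Dense S) (hm : IsMeagre S) :
    IsMeagre (Set.univ : Set ↥S) := by
  rw [isMeagre_iff_countable_union_isNowhereDense] at hm ⊢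
  obtain ⟨T, hT, hTc, hsub⟩ := hm
  refine ⟨(fun t => (Subtype.val : ↥S → α) ⁻¹' t) '' T, ?_, hTc.image _, ?_⟩
  · rintro t ⟨u, hu, rfl⟩; exact nwd_subtype hd (hT u hu)
  · rintro ⟨x, hxS⟩ -
    obtain ⟨t, ht, hxt⟩ := hsub hxS
    exact ⟨Subtype.val ⁻¹' t, ⟨t, ht, rfl⟩, hxt⟩

lemma nwd_union_closed {A B : Set α} (hAc : IsClosed A) (hA : IsNowhereDense A)
    (hBc : IsClosed B) (hB : IsNowhereDense B) : IsNowhereDense (A ∪ B) := by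
  rw [(hAc.union hBc).isNowhereDense_iff, Set.eq_empty_iff_forall_notMem]
  intro x hx
  have h1 : interior (A ∪ B) \ A ⊆ interior B :=
    interior_maximal (fun y hy => (interior_subset hy.1).resolve_left hy.2)
      (isOpen_interior.sdiff hAc)
  have h2 : interior (A ∪ B) ⊆ A := by
    intro y hy
    by_contra hyA
    have h3 := h1 ⟨hy, hyA⟩
    rw [hBc.isNowhereDense_iff.mp hB] at h3
    exact h3
  have h4 : x ∈ interior A := interior_maximal h2 isOpen_interior hx
  rw [hAc.isNowhereDense_iff.mp hA] at h4
  exact h4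

lemma exists_countable_dense_isGδ {X : Type*} [TopologicalSpace X]
    [SecondCountableTopology X] [T1Space X] [Nonempty X]
    (h : IsMeagre (Set.univ : Set X)) :
    ∃ E : Set X, E.Countable ∧ Dense E ∧ IsGδ E := by
  obtain ⟨b, hbc, hbne, hbB⟩ := TopologicalSpace.exists_countable_basis X
  have hbnonempty : b.Nonempty := by
    rcases Set.eq_empty_or_nonempty b with rfl | hne
    · exfalso
      have := hbB.sUnion_eq
      rw [Set.sUnion_empty] at this
      exact (Set.univ_nonempty).ne_empty this.symm
    · exact hne
  obtain ⟨U, hU⟩ := hbc.exists_eq_range hbnonempty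
  rw [isMeagre_iff_countable_union_isNowhereDense] at h
  obtain ⟨𝒮, h𝒮, h𝒮c, hcover⟩ := h
  have h𝒮ne : 𝒮.Nonempty := by
    rcases Set.eq_empty_or_nonempty 𝒮 with rfl | hne
    · exfalso
      have := hcover (Set.mem_univ (Classical.arbitrary X))
      rw [Set.sUnion_empty] at this
      exact this
    · exact hne
  obtain ⟨T, hT⟩ := h𝒮c.exists_eq_range h𝒮ne
  -- increasing closed nowhere dense cover
  let G : ℕ → Set X := fun k => Nat.rec (closure (T 0)) (fun n Gn => Gn ∪ closure (T (n + 1))) k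
  have hGsucc : ∀ n, G (n + 1) = G n ∪ closure (T (n + 1)) := fun n => rfl
  have hGprop : ∀ k, IsClosed (G k) ∧ IsNowhereDense (G k) := by
    intro k
    induction k with
    | zero => exact ⟨isClosed_closure, (h𝒮 (T 0) (hT ▸ ⟨0, rfl⟩)).closure⟩
    | succ n ih =>
        rw [hGsucc]
        exact ⟨ih.1.union isClosed_closure,
          nwd_union_closed ih.1 ih.2 isClosed_closure (h𝒮 (T (n + 1)) (hT ▸ ⟨n + 1, rfl⟩)).closure⟩
  have hGmono : Monotone G := monotone_nat_of_le_succ fun n => by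
    rw [hGsucc]; exact Set.subset_union_left
  have hTG : ∀ i, T i ⊆ G i := by
    intro i
    cases i with
    | zero => exact subset_closure
    | succ n => rw [hGsucc]; exact subset_closure.trans Set.subset_union_right
  -- pick points
  have hpick : ∀ n, ∃ p, p ∈ U n \ G n := by
    intro n
    have hUno : IsOpen (U n) := hbB.isOpen (hU ▸ ⟨n, rfl⟩)
    have hUnne : (U n).Nonempty := by
      rcases Set.eq_empty_or_nonempty (U n) with he | hne
      · exact absurd (he ▸ (hU ▸ ⟨n, rfl⟩ : U n ∈ b)) hbne
      · exact hne
    by_contra hc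
    push_neg at hc
    have hsub : U n ⊆ G n := fun p hp => by
      by_contra hpn; exact hc p ⟨hp, hpn⟩
    have : U n ⊆ interior (G n) := interior_maximal hsub hUno
    rw [(hGprop n).1.isNowhereDense_iff.mp (hGprop n).2] at this
    exact hUnne.ne_empty (Set.subset_empty_iff.mp this)
  choose x hx using hpick
  refine ⟨Set.range x, Set.countable_range x, ?_, ?_⟩
  · -- dense
    rw [hbB.dense_iff]
    intro o ho _
    obtain ⟨n, rfl⟩ : ∃ n, U n = o := by
      have : o ∈ Set.range U := hU ▸ ho
      obtain ⟨n, hn⟩ := this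
      exact ⟨n, hn⟩
    exact ⟨x n, (hx n).1, ⟨n, rfl⟩⟩
  · -- Gδ
    have hEG : ∀ k, Set.range x ∩ G k ⊆ x '' {i | i ≤ k} := by
      rintro k z ⟨⟨n, rfl⟩, hzG⟩
      refine ⟨n, ?_, rfl⟩
      simp only [Set.mem_setOf_eq]
      by_contra hn
      push_neg at hn
      exact (hx n).2 (hGmono (le_of_lt hn) hzG)
    have heq : Set.range x = ⋂ k, ((G k)ᶜ ∪ (Set.range x ∩ G k)) := by
      apply Set.Subset.antisymm
      · intro z hz
        apply Set.mem_iInter.mpr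
        intro k
        rcases Classical.em (z ∈ G k) with hzk | hzk
        · exact Set.mem_union_right _ ⟨hz, hzk⟩
        · exact Set.mem_union_left _ hzk
      · intro z hz
        obtain ⟨t, ht, hzt⟩ := hcover (Set.mem_univ z)
        obtain ⟨i, rfl⟩ : ∃ i, T i = t := by
          have : t ∈ Set.range T := hT ▸ ht
          obtain ⟨i, hi⟩ := this
          exact ⟨i, hi⟩
        rcases Set.mem_iInter.mp hz i with h | h
        · exact absurd (hTG i hzt) h
        · exact h.1
    rw [heq]
    refine IsGδ.iInter fun k => IsGδ.union ((hGprop k).1.isOpen_compl.isGδ) ?_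
    exact Set.Finite.isGδ (((Set.finite_Iic k).image x).subset (hEG k))

lemma cantor_no_countable_dense_Gδ {Q : Set (ℕ → Bool)} (hc : Q.Countable) (hd : Dense Q)
    (hg : IsGδ Q) : False := by
  have hsing : ∀ x : ℕ → Bool, IsNowhereDense ({x} : Set (ℕ → Bool)) := by
    intro x
    rw [isClosed_singleton.isNowhereDense_iff, Set.eq_empty_iff_forall_notMem]
    intro z hz
    have hzx : z ∈ ({x} : Set (ℕ → Bool)) := interior_subset hz
    rw [Set.mem_singleton_iff] at hzx
    subst hzx
    have hz' : ({z} : Set (ℕ → Bool)) ∈ 𝓝 z := mem_interior_iff_mem_nhds.mp hz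
    rw [nhds_pi, Filter.mem_pi] at hz'
    obtain ⟨I, hIf, t, ht, hsub⟩ := hz'
    obtain ⟨n, hn⟩ := hIf.infinite_compl.nonempty
    have hmem : Function.update z n (!z n) ∈ I.pi t := by
      intro i hi
      rw [Function.update_of_ne (fun h => hn (by rw [← h]; exact hi))]
      exact mem_of_mem_nhds (ht i)
    have h2 := hsub hmem
    rw [Set.mem_singleton_iff] at h2
    have h3 := congrFun h2 n
    rw [Function.update_self] at h3
    exact Bool.not_ne_self (z n) h3
  have hQm : IsMeagre Q := by
    rw [isMeagre_iff_countable_union_isNowhereDense]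
    exact ⟨(fun q => ({q} : Set (ℕ → Bool))) '' Q,
      by rintro t ⟨q, _, rfl⟩; exact hsing q,
      hc.image _, fun q hq => ⟨{q}, ⟨q, hq, rfl⟩, rfl⟩⟩
  have hQc : IsMeagre Qᶜ := by
    rw [IsMeagre, compl_compl]
    exact residual_of_dense_Gδ hg hd
  have hempty : (∅ : Set (ℕ → Bool)) ∈ residual (ℕ → Bool) := by
    have := Filter.inter_mem hQm hQc
    rwa [Set.inter_compl_self] at this
  have hdense : Dense (∅ : Set (ℕ → Bool)) := dense_of_mem_residual hempty
  exact Set.not_nonempty_empty hdense.nonempty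

end Helpers

lemma dense_cantorCopy (F : Set (Set ℕ)) (hF : IsFilterOn F) (hFr : ExtendsFrechet F) :
    Dense (cantorCopy F) := by
  rw [dense_iff_inter_open]
  rintro U hU ⟨z, hz⟩
  rw [isOpen_pi_iff] at hU
  obtain ⟨I, u, hu, hsub⟩ := hU z hz
  classical
  refine ⟨fun n => if n ∈ I then z n else true, hsub fun i hi => ?_, ?_⟩
  · show (if i ∈ I then z i else true) ∈ u i
    rw [if_pos (Finset.mem_coe.mp hi)]
    exact (hu i hi).2
  · show toSet (fun n => if n ∈ I then z n else true) ∈ F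
    have hA : ((↑I : Set ℕ))ᶜ ∈ F := hFr _ (by rw [compl_compl]; exact I.finite_toSet)
    refine hF.2.2.2 _ _ hA ?_
    intro a ha
    simp only [Set.mem_compl_iff, Finset.mem_coe] at ha
    show (if a ∈ I then z a else true) = true
    rw [if_neg ha]

/-- If the countable power `F^ω` of a filter `F` on `ω` extending the Fréchet filter is
countable dense homogeneous, then `F` is non-meager. -/
theorem stmt3 (F : Set (Set ℕ)) (hF : IsFilterOn F) (hFr : ExtendsFrechet F)
    (hCDH : CDH (ℕ → ↥(cantorCopy F))) :
    NonMeagerFamily F := by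
  intro hMeagre
  have hSdense : Dense (cantorCopy F) := dense_cantorCopy F hF hFr
  have hp : (fun _ : ℕ => true) ∈ cantorCopy F := by
    show toSet _ ∈ F
    have h1 : toSet (fun _ : ℕ => true) = Set.univ := by
      ext a; simp [toSet]
    rw [h1]; exact hF.1
  have hq : (fun n : ℕ => decide (0 < n)) ∈ cantorCopy F := by
    show toSet _ ∈ F
    apply hFr
    have h1 : (toSet (fun n : ℕ => decide (0 < n)))ᶜ ⊆ {0} := by
      intro a ha
      simp only [toSet, Set.mem_compl_iff, Set.mem_setOf_eq, decide_eq_true_eq] at ha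
      simp only [Set.mem_singleton_iff]
      omega
    exact (Set.finite_singleton 0).subset h1
  haveI : Nonempty ↥(cantorCopy F) := ⟨⟨_, hp⟩⟩
  have hXmeagre : IsMeagre (Set.univ : Set (ℕ → ↥(cantorCopy F))) := by
    have h1 : IsMeagre (Set.univ : Set ↥(cantorCopy F)) :=
      meagre_univ_of_dense_meagre hSdense hMeagre
    have h2 := meagre_preimage (f := (Function.eval 0 : (ℕ → ↥(cantorCopy F)) → ↥(cantorCopy F)))
      (continuous_apply 0) (isOpenMap_eval 0) h1
    simpa using h2
  obtain ⟨E, hEc, hEd, hEg⟩ := exists_countable_dense_isGδ hXmeagre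
  set p : ↥(cantorCopy F) := ⟨_, hp⟩ with hpdef
  set q : ↥(cantorCopy F) := ⟨_, hq⟩ with hqdef
  have hpq : p ≠ q := by
    intro h
    have h0 := congrFun (congrArg Subtype.val h) 0
    simp [hpdef, hqdef] at h0
  classical
  let g : (ℕ → Bool) → (ℕ → ↥(cantorCopy F)) := fun y n => if y n then p else q
  have hginj : Function.Injective g := by
    intro y y' h
    funext n
    have hn := congrFun h n
    by_cases hy : y n <;> by_cases hy' : y' n <;>
      simp only [g, hy, hy', if_true, if_false, if_pos, if_neg] at hn ⊢
    · exact absurd hn hpq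
    · exact absurd hn.symm hpq
  have hgcont : Continuous g := by
    refine continuous_pi fun n => ?_
    exact (continuous_of_discreteTopology (f := fun b : Bool => if b then p else q)).comp
      (continuous_apply n)
  obtain ⟨Q₀, hQ₀c, hQ₀d⟩ := TopologicalSpace.exists_countable_dense (ℕ → Bool)
  set Q : Set (ℕ → ↥(cantorCopy F)) := g '' Q₀ with hQdef
  set D : Set (ℕ → ↥(cantorCopy F)) := Q ∪ E with hDdef
  have hDc : D.Countable := (hQ₀c.image g).union hEc
  have hDd : Dense D := hEd.mono Set.subset_union_right
  obtain ⟨h, hh⟩ := hCDH D E hDc hDd hEc hEd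
  have hDg : IsGδ D := by
    have h1 : D = h ⁻¹' E := by
      rw [← hh, Set.preimage_image_eq _ h.injective]
    rw [h1]
    exact isGδ_preimage' h.continuous hEg
  have hQg : IsGδ Q := by
    have hQsub : Q ⊆ D := Set.subset_union_left
    have heq : Q = D ∩ ⋂ c ∈ (D \ Q), ({c}ᶜ : Set (ℕ → ↥(cantorCopy F))) := by
      apply Set.Subset.antisymm
      · intro z hz
        refine ⟨hQsub hz, Set.mem_biInter fun c hc => ?_⟩
        intro hzc
        rw [Set.mem_singleton_iff] at hzc
        exact hc.2 (hzc ▸ hz)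
      · intro z hz
        by_contra hzQ
        exact (Set.mem_iInter₂.mp hz.2) z ⟨hz.1, hzQ⟩ rfl
    rw [heq]
    refine hDg.inter (IsGδ.biInter (hDc.mono Set.diff_subset) fun c _ => IsGδ.compl_singleton c)
  have hQ₀g : IsGδ Q₀ := by
    have h1 : Q₀ = g ⁻¹' Q := by rw [hQdef, Set.preimage_image_eq _ hginj]
    rw [h1]
    exact isGδ_preimage' hgcont hQg
  exact cantor_no_countable_dense_Gδ hQ₀c hQ₀d hQ₀g
end

section
/- Let I be a non-meager P-ideal on ω (containing all finite sets) and let D₀ and D₁ be two countable dense subsets of I. Then there exists x ∈ I such that: (i) for each d ∈ D₀ ∪ D₁, d ⊆* x; and (ii) for each i ∈ {0,1}, each d ∈ D_i, each n < ω and each function t : (n ∩ x) → 2, there exists e ∈ D_{1−i} such that d \ x = e \ x and the characteristic function of e restricted to n ∩ x equals t. -/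
open Set

/-!
Fix `y ∈ I` almost containing every member of `D 0 ∪ D 1` (P-ideal). For each level `a` there
are only finitely many patterns `s ⊆ [0, a)`, and each is realised below `a` by some member of
`D i` (density, finite sets lie in `I`); so one bound `N a` captures all these realisations
outside `y`. Choose blocks `a₀ < a₁ < ⋯` with `N aₖ ≤ aₖ₊₁`. Non-meagerness yields `x₀ ∈ I`
containing infinitely many blocks `[aₖ, aₖ₊₁)`, and `x = x₀ ∪ y` works: given `d`, `n`, `t`,
pick a block inside `x₀` beyond `n` and beyond `d \ y`, and let `e` realise below `aₖ` the
pattern that follows `t` on `n ∩ x` and `d` elsewhere. Off `x`, `d` and `e` agree below `aₖ`,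
the block lies in `x`, and beyond it neither set meets the complement of `y`.
-/
open Filter

theorem Set.Finite.exists_subset_Iio {α : Type*} [Preorder α] [IsDirectedOrder α] [NoMaxOrder α]
    [Nonempty α] {s : Set α} (hs : s.Finite) : ∃ N, s ⊆ Iio N := by
  obtain ⟨b, hb⟩ := hs.bddAbove
  obtain ⟨N, hN⟩ := exists_gt b
  exact ⟨N, fun p hp => (hb hp).trans_lt hN⟩

theorem IsPIdealOn.exists_diff_finite {α : Type*} {I : Set (Set α)} (hP : IsPIdealOn I)
    (h0 : ∅ ∈ I) {C : Set (Set α)} (hC : C.Countable) (hCI : C ⊆ I) :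
    ∃ y ∈ I, ∀ c ∈ C, (c \ y).Finite := by
  obtain ⟨f, hf⟩ := (hC.insert ∅).exists_eq_range (insert_nonempty _ _)
  have hfI : ∀ n, f n ∈ I := fun n =>
    (insert_subset h0 hCI) (hf ▸ mem_range_self n)
  obtain ⟨y, hyI, hy⟩ := hP f hfI
  refine ⟨y, hyI, fun c hc => ?_⟩
  obtain ⟨n, rfl⟩ : c ∈ range f := hf ▸ mem_insert_of_mem _ hc
  exact hy n

theorem DenseIn.exists_mem_forall_lt_iff {D F : Set (Set ℕ)} (hD : DenseIn D F)
    {w : Set ℕ} (hw : w ∈ F) (a : ℕ) : ∃ e ∈ D, ∀ p < a, p ∈ e ↔ p ∈ w := by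
  classical
  set f : ℕ → Bool := fun p => decide (p ∈ w)
  have hf : f ∈ cantorCopy F := by
    have : toSet f = w := by ext p; simp [toSet, f]
    simpa [cantorCopy, this]
  obtain ⟨g, hgf, hgD⟩ := mem_closure_iff.1 (hD.2 hf) (Set.pi (Iio a) fun p => {f p})
    (isOpen_set_pi (finite_Iio a) fun _ _ => isOpen_discrete _) fun p _ => rfl
  refine ⟨toSet g, hgD, fun p hp => ?_⟩
  have : g p = f p := hgf p hp
  simp [toSet, this, f]

theorem isNowhereDense_setOf_forall_ge_exists_eq_false {l r : ℕ → ℕ}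
    (hl : Tendsto l atTop atTop) (m : ℕ) :
    IsNowhereDense {f : ℕ → Bool | ∀ k ≥ m, ∃ j ∈ Ico (l k) (r k), f j = false} := by
  have hclosed : IsClosed {f : ℕ → Bool | ∀ k ≥ m, ∃ j ∈ Ico (l k) (r k), f j = false} := by
    simp only [ofPred_forall]
    refine isClosed_iInter fun k => isClosed_iInter fun _ => ?_
    have : {f : ℕ → Bool | ∃ j ∈ Ico (l k) (r k), f j = false} =
        ⋃ j ∈ Ico (l k) (r k), {f | f j = false} := by
      ext; simp
    rw [this]
    exact (finite_Ico _ _).isClosed_biUnion fun j _ =>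
      isClosed_eq (continuous_apply j) continuous_const
  refine hclosed.isNowhereDense_iff.2 (eq_empty_iff_forall_notMem.2 fun f hf => ?_)
  classical
  obtain ⟨F, u, hu, hFu⟩ := isOpen_pi_iff.1 isOpen_interior f hf
  obtain ⟨k, hkm, hFk⟩ := ((eventually_ge_atTop m).and
    (hl.eventually_gt_atTop (F.sup id))).exists
  set g : ℕ → Bool := fun p => if p ∈ F then f p else true
  have hg : g ∈ interior _ := hFu fun p hp => by
    simpa only [g, if_pos (Finset.mem_coe.1 hp)] using (hu p hp).2
  obtain ⟨j, hj, hgj⟩ := interior_subset hg k hkm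
  by_cases hjF : j ∈ F
  · exact absurd ((Finset.le_sup (f := id) hjF).trans_lt hFk) (not_lt.2 hj.1)
  · simp [g, hjF] at hgj

theorem NonMeagerFamily.exists_mem_frequently_Ico_subset {F : Set (Set ℕ)}
    (hF : NonMeagerFamily F) {l r : ℕ → ℕ} (hl : Tendsto l atTop atTop) :
    ∃ x ∈ F, ∃ᶠ k in atTop, Ico (l k) (r k) ⊆ x := by
  by_contra! h
  refine hF (IsMeagre.mono ?_ (isMeagre_iUnion fun m =>
    (isNowhereDense_setOf_forall_ge_exists_eq_false (r := r) hl m).isMeagre))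
  intro f hf
  obtain ⟨m, hm⟩ := eventually_atTop.1 (h _ hf)
  refine mem_iUnion.2 ⟨m, fun k hk => ?_⟩
  obtain ⟨j, hj, hfj⟩ := not_subset.1 (hm k hk)
  exact ⟨j, hj, by simpa [toSet] using hfj⟩

theorem exists_approx_diff_subset_Iio {ι : Type*} [Finite ι] {D : ι → Set (Set ℕ)} {y : Set ℕ}
    (hD : ∀ i a (s : Finset ℕ), ∃ e ∈ D i, ∀ p < a, p ∈ e ↔ p ∈ s)
    (hy : ∀ i, ∀ e ∈ D i, (e \ y).Finite) :
    ∃ (approx : ι → ℕ → Finset ℕ → Set ℕ) (N : ℕ → ℕ), ∀ i a s, s ⊆ Finset.range a →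
      approx i a s ∈ D i ∧ (∀ p < a, p ∈ approx i a s ↔ p ∈ s) ∧ approx i a s \ y ⊆ Iio (N a) := by
  choose approx happrox using hD
  have hfin : ∀ a, (⋃ i, ⋃ s ∈ (Finset.range a).powerset, approx i a s \ y).Finite := fun a =>
    finite_iUnion fun i => (Finset.finite_toSet _).biUnion fun s _ => hy i _ (happrox i a s).1
  choose N hN using fun a => (hfin a).exists_subset_Iio
  refine ⟨approx, N, fun i a s hs => ⟨(happrox i a s).1, (happrox i a s).2, ?_⟩⟩
  simp only [iUnion_subset_iff] at hN
  exact hN a i s (Finset.mem_powerset.2 hs)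

theorem exists_strictMono_forall_le_succ (N : ℕ → ℕ) :
    ∃ a : ℕ → ℕ, StrictMono a ∧ ∀ k, N (a k) ≤ a (k + 1) :=
  ⟨fun k => Nat.rec 0 (fun _ a => max (a + 1) (N a)) k,
    strictMono_nat_of_lt_succ fun _ => Nat.lt_of_succ_le (le_max_left _ _),
    fun _ => le_max_right _ _⟩

theorem diff_eq_diff_of_Ico_subset {d e x y : Set ℕ} {a b : ℕ} (hyx : y ⊆ x)
    (hlow : ∀ p < a, p ∉ x → (p ∈ d ↔ p ∈ e)) (hblock : Ico a b ⊆ x)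
    (hd : d \ y ⊆ Iio b) (he : e \ y ⊆ Iio b) : d \ x = e \ x := by
  ext p
  simp only [Set.mem_sdiff]
  by_cases hpx : p ∈ x
  · simp [hpx]
  rcases lt_or_ge p a with hpa | hpa
  · simp [hpx, hlow p hpa hpx]
  have hpb : b ≤ p := not_lt.1 fun hpb => hpx (hblock ⟨hpa, hpb⟩)
  have hpy : p ∉ y := fun hpy => hpx (hyx hpy)
  exact iff_of_false (fun hp => hpb.not_gt (hd ⟨hp.1, hpy⟩))
    (fun hp => hpb.not_gt (he ⟨hp.1, hpy⟩))

theorem exists_subset_range_piecewise (x d : Set ℕ) (t : ℕ → Bool) {n a : ℕ} (hna : n ≤ a) :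
    ∃ s ⊆ Finset.range a, (∀ p < a, p ∉ x → (p ∈ d ↔ p ∈ s)) ∧
      ∀ p < n, p ∈ x → (p ∈ s ↔ t p = true) := by
  classical
  refine ⟨(Finset.range a).filter fun p => if p < n ∧ p ∈ x then t p = true else p ∈ d,
    Finset.filter_subset _ _, fun p hp hpx => ?_, fun p hp hpx => ?_⟩
  · simp only [Finset.mem_filter, Finset.mem_range, if_neg fun h : p < n ∧ p ∈ x => hpx h.2]
    exact (and_iff_right hp).symm
  · simp only [Finset.mem_filter, Finset.mem_range, if_pos (show p < n ∧ p ∈ x from ⟨hp, hpx⟩)]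
    exact and_iff_right (hp.trans_le hna)

/-- Combinatorial lemma: for a non-meager P-ideal `I` and countable dense subsets
`D 0`, `D 1` of `I` there is `x ∈ I` such that (i) every `d ∈ D 0 ∪ D 1` is almost
contained in `x`, and (ii) for each `i`, `d ∈ D i`, `n < ω` and `t : (n ∩ x) → 2`
there is `e ∈ D (1 - i)` with `d \ x = e \ x` and `χ(e)` agreeing with `t` on `n ∩ x`. -/
theorem stmt5 (I : Set (Set ℕ)) (hI : IsIdealOn I) (hfin : ContainsFinites I)
    (hP : IsPIdealOn I) (hNM : NonMeagerFamily I)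
    (D : Fin 2 → Set (Set ℕ)) (hc : ∀ i, (D i).Countable)
    (hd : ∀ i, DenseIn (D i) I) :
    ∃ x ∈ I,
      (∀ i : Fin 2, ∀ d ∈ D i, (d \ x).Finite) ∧
      (∀ i : Fin 2, ∀ d ∈ D i, ∀ n : ℕ, ∀ t : ℕ → Bool,
        ∃ e ∈ D (1 - i), d \ x = e \ x ∧
          ∀ k < n, k ∈ x → (k ∈ e ↔ t k = true)) := by
  obtain ⟨y, hyI, hy⟩ := hP.exists_diff_finite hI.1 (countable_iUnion hc)
    (iUnion_subset fun i => (hd i).1)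
  have hyD : ∀ i, ∀ d ∈ D i, (d \ y).Finite := fun i d hdi => hy d (mem_iUnion_of_mem i hdi)
  obtain ⟨approx, N, happrox⟩ := exists_approx_diff_subset_Iio
    (fun i a s => (hd i).exists_mem_forall_lt_iff (hfin _ s.finite_toSet) a) hyD
  obtain ⟨a, ha, haN⟩ := exists_strictMono_forall_le_succ N
  obtain ⟨x₀, hx₀I, hx₀⟩ :=
    hNM.exists_mem_frequently_Ico_subset (r := a ∘ Nat.succ) ha.tendsto_atTop
  refine ⟨x₀ ∪ y, hI.2.2.1 _ _ hx₀I hyI, fun i d hdi =>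
    (hyD i d hdi).subset (sdiff_subset_sdiff_right subset_union_right), fun i d hdi n t => ?_⟩
  obtain ⟨b, hb⟩ := (hyD i d hdi).exists_subset_Iio
  obtain ⟨k, hblock, hk⟩ := (hx₀.and_eventually (eventually_ge_atTop (max n b))).exists
  have hnk : n ≤ a k := (le_max_left n b).trans (hk.trans (ha.id_le k))
  obtain ⟨s, hs, hsd, hst⟩ := exists_subset_range_piecewise (x₀ ∪ y) d t hnk
  obtain ⟨heD, hes, hey⟩ := happrox (1 - i) (a k) s hs
  have hba : b ≤ a (k + 1) :=
    (le_max_right n b).trans (hk.trans ((ha.id_le k).trans (ha.monotone k.le_succ)))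
  refine ⟨_, heD, diff_eq_diff_of_Ico_subset subset_union_right
    (fun p hp hpx => (hsd p hp hpx).trans (hes p hp).symm) (hblock.trans subset_union_left)
    (hb.trans (Iio_subset_Iio hba)) (hey.trans (Iio_subset_Iio (haN k))),
    fun p hp hpx => (hes p (hp.trans_le hnk)).trans (hst p hp hpx)⟩
end

section
/- If F is a non-meager P-filter on ω extending the Fréchet filter, then the countable power F^ω (with the product topology, F carrying the subspace topology from 2^ω) is homeomorphic to a non-meager P-filter on a countable set. -/
open Set

/-!
Currying identifies `F^ω` with the family of subsets of `ℕ × ℕ` all of whose vertical sections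
lie in `F`. The filter properties pass to this family section by section; for the P-property, a
pseudo-intersection `Z` of all sections of all `X k` yields
`{(n, m) | m ∈ Z, (n, m) ∈ X 0 ∩ ⋯ ∩ X n}`.

For non-meagerness, cover the family by increasing nowhere dense sets `N j`. As there are only
finitely many patterns on a finite square, a single finite pattern on an annulus
`[0, t)² \ [0, s)²` keeps every point that follows it out of `N j`; iterating gives an interval
partition `a` with such a pattern on each annulus `[0, a (j + 1))² \ [0, a j)²`. As `F` is not
meager, some `A ∈ F` misses infinitely many intervals `[a j, a (j + 1))`. Then
`{(n, m) | m ∈ A, a (n + 1) ≤ m}` is empty on the corresponding annuli; filling them with the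
chosen patterns gives a member of the family outside every `N j`.
-/

open Filter

section NowhereDense

variable {X : Type*} [TopologicalSpace X]

lemma IsNowhereDense.union {s t : Set X} (hs : IsNowhereDense s) (ht : IsNowhereDense t) :
    IsNowhereDense (s ∪ t) := by
  rw [IsNowhereDense, closure_union, interior_union_isClosed_of_interior_empty isClosed_closure ht]
  exact hs

lemma IsNowhereDense.biUnion {ι : Type*} {I : Set ι} (hI : I.Finite) {f : ι → Set X}
    (hf : ∀ i ∈ I, IsNowhereDense (f i)) : IsNowhereDense (⋃ i ∈ I, f i) := by
  induction I, hI using Set.Finite.induction_on with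
  | empty => simp
  | insert _ _ ih =>
    rw [biUnion_insert]
    exact (hf _ (mem_insert _ _)).union (ih fun i hi => hf i (mem_insert_of_mem _ hi))

lemma IsMeagre.exists_monotone_isNowhereDense {s : Set X} (hs : IsMeagre s) :
    ∃ N : ℕ → Set X, Monotone N ∧ (∀ j, IsNowhereDense (N j)) ∧ s ⊆ ⋃ j, N j := by
  obtain ⟨S, hS, hS_count, hsS⟩ := isMeagre_iff_countable_union_isNowhereDense.1 hs
  obtain ⟨M, hM⟩ := (hS_count.insert ∅).exists_eq_range (insert_nonempty _ _)
  have hM_nwd : ∀ k, IsNowhereDense (M k) := by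
    intro k
    rcases (hM ▸ mem_range_self k : M k ∈ insert ∅ S) with h | h
    · exact h ▸ isNowhereDense_empty
    · exact hS _ h
  refine ⟨accumulate M, monotone_accumulate,
    fun j => IsNowhereDense.biUnion (finite_Iic j) fun k _ => hM_nwd k, ?_⟩
  rw [iUnion_accumulate, ← sUnion_range, ← hM, sUnion_insert, empty_union]
  exact hsS

end NowhereDense

section Cylinder

variable {α X : Type*} [TopologicalSpace X]

lemma IsOpen.exists_finset_setOf_eqOn_subset {U : Set (α → X)} (hU : IsOpen U) {y : α → X}
    (hy : y ∈ U) : ∃ v : Finset α, {z | EqOn z y v} ⊆ U := by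
  obtain ⟨v, V, hV, hvU⟩ := isOpen_pi_iff.1 hU y hy
  exact ⟨v, fun z hz => hvU fun a ha => hz ha ▸ (hV a ha).2⟩

variable [DiscreteTopology X]

lemma isOpen_setOf_eqOn (w : α → X) {u : Set α} (hu : u.Finite) : IsOpen {z | EqOn z w u} := by
  have : {z | EqOn z w u} = u.pi fun a => {w a} := by
    ext z; simp [EqOn, Set.mem_pi]
  rw [this]
  exact isOpen_set_pi hu fun a _ => isOpen_discrete _

theorem isNowhereDense_iff_forall_exists_eqOn {N : Set (α → X)} :
    IsNowhereDense N ↔ ∀ (w : α → X) (u : Finset α),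
      ∃ (y : α → X) (v : Finset α), EqOn y w u ∧ ∀ z, EqOn z y v → z ∉ N := by
  constructor
  · intro hN w u
    have hdense : Dense (closure N)ᶜ := interior_eq_empty_iff_dense_compl.1 hN
    obtain ⟨y, hyw, hyN⟩ := hdense.inter_open_nonempty _ (isOpen_setOf_eqOn w u.finite_toSet)
      ⟨w, eqOn_refl _ _⟩
    obtain ⟨v, hv⟩ := isClosed_closure.isOpen_compl.exists_finset_setOf_eqOn_subset hyN
    exact ⟨y, v, hyw, fun z hz hzN => hv hz (subset_closure hzN)⟩
  · intro h
    refine eq_empty_iff_forall_notMem.2 fun w hw => ?_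
    obtain ⟨u, hu⟩ := isOpen_interior.exists_finset_setOf_eqOn_subset hw
    obtain ⟨y, v, hyw, hyN⟩ := h w u
    obtain ⟨z, hzy, hzN⟩ := mem_closure_iff.1 (interior_subset (hu hyw)) _
      (isOpen_setOf_eqOn y v.finite_toSet) (eqOn_refl _ _)
    exact hyN z hzy hzN

end Cylinder

section Pattern

variable {α : Type*} {N : Set (α → Bool)}

lemma IsNowhereDense.exists_eqOn_sdiff_of_finset (hN : IsNowhereDense N) (u : Finset α)
    (W : Finset (α → Bool)) : ∃ (v : Finset α) (q : α → Bool),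
      ∀ w ∈ W, ∀ z, EqOn z w u → EqOn z q (↑v \ ↑u) → z ∉ N := by
  classical
  induction W using Finset.induction_on with
  | empty => exact ⟨∅, fun _ => false, by simp⟩
  | insert w W _ ih =>
    obtain ⟨v, q, hq⟩ := ih
    -- the new pattern `y` extends `q` off `u`, so the old prefixes keep working
    obtain ⟨y, I, hy, hyN⟩ :=
      isNowhereDense_iff_forall_exists_eqOn.1 hN (u.piecewise w q) (u ∪ v)
    refine ⟨u ∪ v ∪ I, y, fun w₀ hw₀ z hzw hzy => ?_⟩
    rcases Finset.mem_insert.1 hw₀ with rfl | hw₀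
    · refine hyN z fun a ha => ?_
      by_cases hau : a ∈ u
      · rw [hzw hau, hy (by simp [hau]), Finset.piecewise_eq_of_mem _ _ _ hau]
      · exact hzy ⟨by simp [ha], hau⟩
    · refine hq w₀ hw₀ z hzw fun a ha => ?_
      have hau : a ∉ u := ha.2
      rw [hzy ⟨by simp [Finset.mem_coe.1 ha.1], hau⟩, hy (by simp [Finset.mem_coe.1 ha.1]),
        Finset.piecewise_eq_of_notMem _ _ _ hau]

theorem IsNowhereDense.exists_eqOn_sdiff (hN : IsNowhereDense N) (u : Finset α) :
    ∃ (v : Finset α) (q : α → Bool), ∀ z, EqOn z q (↑v \ ↑u) → z ∉ N := by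
  obtain ⟨W, hW⟩ := isCompact_univ.elim_finite_subcover
    (fun w : α → Bool => {z | EqOn z w u}) (fun w => isOpen_setOf_eqOn w u.finite_toSet)
    fun z _ => mem_iUnion.2 ⟨z, eqOn_refl _ _⟩
  obtain ⟨v, q, hq⟩ := hN.exists_eqOn_sdiff_of_finset u W
  refine ⟨v, q, fun z hz => ?_⟩
  obtain ⟨w, hw, hzw⟩ := mem_iUnion₂.1 (hW (mem_univ z))
  exact hq w hw z hzw hz

end Pattern

def square (s : ℕ) : Set (ℕ × ℕ) := Iio s ×ˢ Iio s

lemma square_mono : Monotone square := fun _ _ h => prod_mono (Iio_subset_Iio h) (Iio_subset_Iio h)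

lemma IsNowhereDense.exists_eqOn_square_diff {N : Set (ℕ × ℕ → Bool)} (hN : IsNowhereDense N)
    (s : ℕ) : ∃ t, s < t ∧ ∃ q : ℕ × ℕ → Bool, ∀ z, EqOn z q (square t \ square s) → z ∉ N := by
  obtain ⟨v, q, hq⟩ := hN.exists_eqOn_sdiff (Finset.range s ×ˢ Finset.range s)
  obtain ⟨⟨m₁, m₂⟩, hm⟩ := v.bddAbove
  refine ⟨s + m₁ + m₂ + 1, by omega, q, fun z hz => hq z (hz.mono ?_)⟩
  rintro ⟨p₁, p₂⟩ ⟨hpv, hps⟩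
  obtain ⟨h₁, h₂⟩ := hm hpv
  refine ⟨⟨?_, ?_⟩, by simpa [square] using hps⟩ <;> simp only [mem_Iio] at * <;> omega

theorem NonMeagerFamily.exists_mem_frequently_disjoint_Ico {F : Set (Set ℕ)}
    (hF : NonMeagerFamily F) {a : ℕ → ℕ} (ha : Tendsto a atTop atTop) :
    ∃ A ∈ F, ∃ᶠ j in atTop, Disjoint A (Ico (a j) (a (j + 1))) := by
  by_contra! h
  let T : ℕ → Set (ℕ → Bool) := fun m =>
    {x | ∀ j ≥ m, ¬Disjoint (toSet x) (Ico (a j) (a (j + 1)))}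
  have hT : ∀ m, IsNowhereDense (T m) := by
    refine fun m => isNowhereDense_iff_forall_exists_eqOn.2 fun w u => ?_
    obtain ⟨j, hjm, hju⟩ :=
      ((eventually_ge_atTop m).and (ha.eventually_gt_atTop (u.sup id))).exists
    refine ⟨fun i => if i ∈ Ico (a j) (a (j + 1)) then false else w i,
      Finset.Ico (a j) (a (j + 1)), fun i hi => ?_, fun z hz hzT => hzT j hjm ?_⟩
    · have : i < a j := (Finset.le_sup (f := id) hi).trans_lt hju
      simp [this]
    · refine Set.disjoint_left.2 fun i hiz hi => ?_
      have := hz (Finset.coe_Ico (a j) (a (j + 1)) ▸ hi)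
      simp_all [toSet]
  refine hF ((isMeagre_iUnion fun m => (hT m).isMeagre).mono fun x hx => ?_)
  obtain ⟨m, hm⟩ := eventually_atTop.1 (h (toSet x) hx)
  exact mem_iUnion.2 ⟨m, hm⟩

def IsFilterOn.toFilter {α : Type*} {F : Set (Set α)} (hF : IsFilterOn F) : Filter α where
  sets := F
  univ_sets := hF.1
  sets_of_superset hA hAB := hF.2.2.2 _ _ hA hAB
  inter_sets hA hB := hF.2.2.1 _ _ hA hB

def sectionFamily {α : Type*} (F : Set (Set α)) : Set (Set (ℕ × α)) :=
  {A | ∀ n, Prod.mk n ⁻¹' A ∈ F}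

section SectionFamily

variable {α : Type*} {F : Set (Set α)}

lemma isFilterOn_sectionFamily (hF : IsFilterOn F) : IsFilterOn (sectionFamily F) :=
  ⟨fun _ => hF.1, fun h => hF.2.1 (h 0), fun _ _ hA hB n => hF.2.2.1 _ _ (hA n) (hB n),
    fun _ _ hA hAB n => hF.2.2.2 _ _ (hA n) (preimage_mono hAB)⟩

lemma isPFilterOn_sectionFamily (hF : IsFilterOn F) (hP : IsPFilterOn F) :
    IsPFilterOn (sectionFamily F) := by
  intro X hX
  obtain ⟨Z, hZ, hZX⟩ := hP (fun i => Prod.mk i.unpair.2 ⁻¹' X i.unpair.1)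
    fun i => hX i.unpair.1 i.unpair.2
  have hZX' : ∀ k n, (Z \ Prod.mk n ⁻¹' X k).Finite := fun k n => by
    simpa using hZX (Nat.pair k n)
  let Y : Set (ℕ × α) := {p | p.2 ∈ Z ∧ ∀ k ≤ p.1, p ∈ X k}
  refine ⟨Y, fun n => ?_, fun k => ?_⟩
  · have : Prod.mk n ⁻¹' Y = Z ∩ ⋂ k ∈ Iic n, Prod.mk n ⁻¹' X k := by
      ext m; simp [Y]
    rw [this]
    exact inter_mem (f := hF.toFilter) hZ
      ((biInter_mem (f := hF.toFilter) (finite_Iic n)).2 fun k _ => hX k n)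
  · refine ((finite_Iio k).biUnion fun n _ => (hZX' k n).image (Prod.mk n)).subset ?_
    rintro ⟨n, m⟩ ⟨⟨hmZ, hmX⟩, hnX⟩
    have hnk : n < k := lt_of_not_ge fun hkn => hnX (hmX k hkn)
    exact mem_biUnion hnk ⟨m, ⟨hmZ, hnX⟩, rfl⟩

def sectionFamilyHomeomorph (F : Set (Set α)) :
    (ℕ → cantorCopy F) ≃ₜ cantorCopy (sectionFamily F) where
  toFun x := ⟨fun p => (x p.1).1 p.2, fun n => (x n).2⟩
  invFun y n := ⟨fun m => y.1 (n, m), y.2 n⟩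
  left_inv _ := rfl
  right_inv _ := rfl
  continuous_toFun := Continuous.subtype_mk (continuous_pi fun p =>
    ((continuous_apply p.2).comp continuous_subtype_val).comp (continuous_apply p.1)) _
  continuous_invFun := continuous_pi fun n => Continuous.subtype_mk
    (continuous_pi fun m => (continuous_apply (n, m)).comp continuous_subtype_val :
      Continuous fun y : cantorCopy (sectionFamily F) => fun m => y.1 (n, m)) _

end SectionFamily

lemma pairwise_disjoint_square_diff {a : ℕ → ℕ} (ha : Monotone a) :
    Pairwise (Function.onFun Disjoint fun j => square (a (j + 1)) \ square (a j)) :=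
  (pairwise_disjoint_on _).2 fun _ _ hij =>
    disjoint_sdiff_right.mono_left (sdiff_subset.trans (square_mono (ha hij)))

lemma disjoint_setOf_le_square_diff {A : Set ℕ} {a : ℕ → ℕ} (ha : StrictMono a) {j : ℕ}
    (hj : Disjoint A (Ico (a j) (a (j + 1)))) :
    Disjoint {p : ℕ × ℕ | p.2 ∈ A ∧ a (p.1 + 1) ≤ p.2}
      (square (a (j + 1)) \ square (a j)) := by
  refine disjoint_left.2 ?_
  rintro ⟨n, m⟩ ⟨hmA, hnm⟩ ⟨⟨hn, hm⟩, hnm'⟩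
  simp only [square, mem_prod, mem_Iio, not_and_or, not_lt] at hmA hnm hn hm hnm'
  have hmj : m < a j := lt_of_not_ge fun h => disjoint_left.1 hj hmA ⟨h, hm⟩
  have hjn : j ≤ n := ha.le_apply.trans (by omega)
  have := ha.monotone (show j + 1 ≤ n + 1 by omega)
  omega

lemma mem_union_biUnion_inter_iff {ι β : Type*} {R P : ι → Set β} {B : Set β} {J : Set ι}
    (hR : Pairwise (Function.onFun Disjoint R)) {j : ι} (hj : j ∈ J) (hB : Disjoint B (R j))
    {p : β} (hp : p ∈ R j) : p ∈ B ∪ ⋃ i ∈ J, R i ∩ P i ↔ p ∈ P j := by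
  refine ⟨fun hpZ => ?_, fun hpP => Or.inr (mem_iUnion₂.2 ⟨j, hj, hp, hpP⟩)⟩
  rcases hpZ with hpB | hpR
  · exact absurd hp (disjoint_left.1 hB hpB)
  · obtain ⟨i, -, hpi, hpP⟩ := mem_iUnion₂.1 hpR
    obtain rfl : i = j := by_contra fun hij => disjoint_left.1 (hR hij) hpi hp
    exact hpP

theorem nonMeagerFamily_sectionFamily {F : Set (Set ℕ)} (hF : IsFilterOn F)
    (hFr : ExtendsFrechet F) (hNM : NonMeagerFamily F) : NonMeagerFamily (sectionFamily F) := by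
  classical
  intro hG
  obtain ⟨N, hN_mono, hN, hGN⟩ := hG.exists_monotone_isNowhereDense
  choose t hst q hq using fun j s => (hN j).exists_eqOn_square_diff s
  let a : ℕ → ℕ := fun j => Nat.rec 0 (fun j s => t j s) j
  have ha : StrictMono a := strictMono_nat_of_lt_succ fun j => hst j (a j)
  obtain ⟨A, hA, hAJ⟩ := hNM.exists_mem_frequently_disjoint_Ico ha.tendsto_atTop
  let J := {j | Disjoint A (Ico (a j) (a (j + 1)))}
  let A' : Set (ℕ × ℕ) := {p | p.2 ∈ A ∧ a (p.1 + 1) ≤ p.2}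
  let z : ℕ × ℕ → Bool := fun p =>
    decide (p ∈ A' ∪ ⋃ j ∈ J, (square (a (j + 1)) \ square (a j)) ∩ toSet (q j (a j)))
  have hz_mem : z ∈ cantorCopy (sectionFamily F) := by
    intro n
    have hcofinite : Ici (a (n + 1)) ∈ F := hFr _ (by simp [compl_Ici, finite_Iio])
    refine hF.2.2.2 _ _ (hF.2.2.1 _ _ hA hcofinite) fun m hm => ?_
    simp [toSet, z, A', hm.1, mem_Ici.1 hm.2]
  have hz_eqOn : ∀ j ∈ J, EqOn z (q j (a j)) (square (a (j + 1)) \ square (a j)) :=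
    fun j hj p hp => Bool.eq_iff_iff.2 <| decide_eq_true_iff.trans <|
      mem_union_biUnion_inter_iff (pairwise_disjoint_square_diff ha.monotone) hj
        (disjoint_setOf_le_square_diff ha hj) hp
  obtain ⟨k, hk⟩ := mem_iUnion.1 (hGN hz_mem)
  obtain ⟨j, hj, hkj⟩ := (hAJ.and_eventually (eventually_ge_atTop k)).exists
  exact hq j (a j) z (hz_eqOn j hj) (hN_mono hkj hk)

/-- If `F` is a non-meager P-filter on `ω` extending the Fréchet filter, then `F^ω`
is homeomorphic to a non-meager P-filter on a countably infinite set. -/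
theorem stmt6 (F : Set (Set ℕ)) (hF : IsFilterOn F) (hFr : ExtendsFrechet F)
    (hP : IsPFilterOn F) (hNM : NonMeagerFamily F) :
    ∃ (S : Type) (_ : Countable S) (_ : Infinite S) (G : Set (Set S)),
      IsFilterOn G ∧ IsPFilterOn G ∧ NonMeagerFamily G ∧
      Nonempty ((ℕ → ↥(cantorCopy F)) ≃ₜ ↥(cantorCopy G)) :=
  ⟨ℕ × ℕ, inferInstance, inferInstance, sectionFamily F, isFilterOn_sectionFamily hF,
    isPFilterOn_sectionFamily hF hP, nonMeagerFamily_sectionFamily hF hFr hNM,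
    ⟨sectionFamilyHomeomorph F⟩⟩
end

section
/- Let F be a P-filter on ω and define G = {A ⊆ ω × ω : for every n < ω, the vertical section {x : (n,x) ∈ A} belongs to F}. Then G is a P-filter on ω × ω: for every countable {A_k : k < ω} ⊆ G there exists B ∈ G such that B \ A_k is finite for every k. -/
open Set

/-- Intersection of the first `n` sets of a sequence. -/
def interUpTo (f : ℕ → Set ℕ) : ℕ → Set ℕ
  | 0 => Set.univ
  | n+1 => interUpTo f n ∩ f n

lemma interUpTo_mem {F : Set (Set ℕ)} (hF : IsFilterOn F) (f : ℕ → Set ℕ)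
    (hf : ∀ k, f k ∈ F) : ∀ n, interUpTo f n ∈ F := by
  intro n
  induction n with
  | zero => exact hF.1
  | succ n ih => exact hF.2.2.1 _ _ ih (hf n)

lemma interUpTo_subset (f : ℕ → Set ℕ) {k n : ℕ} (h : k < n) :
    interUpTo f n ⊆ f k := by
  induction n with
  | zero => omega
  | succ n ih =>
    rcases Nat.lt_succ_iff_lt_or_eq.mp h with h | h
    · exact fun x hx => ih h hx.1
    · subst h; exact fun x hx => hx.2

/-- If `F` is a P-filter on `ω`, then the family `G` of all `A ⊆ ω × ω` all of whose
vertical sections belong to `F` is a P-filter on `ω × ω`. -/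
theorem stmt8 (F : Set (Set ℕ)) (hF : IsFilterOn F) (hP : IsPFilterOn F) :
    IsFilterOn {A : Set (ℕ × ℕ) | ∀ n : ℕ, {x : ℕ | (n, x) ∈ A} ∈ F} ∧
      IsPFilterOn {A : Set (ℕ × ℕ) | ∀ n : ℕ, {x : ℕ | (n, x) ∈ A} ∈ F} := by
  set G := {A : Set (ℕ × ℕ) | ∀ n : ℕ, {x : ℕ | (n, x) ∈ A} ∈ F} with hG
  obtain ⟨hu, he, hi, hs⟩ := hF
  constructor
  · refine ⟨fun n => hu, fun h => he ?_, fun A B hA hB n => ?_, fun A B hA hAB n => ?_⟩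
    · have := h 0
      simpa using this
    · exact hi _ _ (hA n) (hB n)
    · exact hs _ _ (hA n) (fun x hx => hAB hx)
  · intro A hA
    -- for each column n, pick a pseudo-intersection of the sections
    have key : ∀ n : ℕ, ∃ Y ∈ F, ∀ k, (Y \ {x : ℕ | (n, x) ∈ A k}).Finite := by
      intro n
      exact hP (fun k => {x : ℕ | (n, x) ∈ A k}) (fun k => hA k n)
    choose Y hYF hYfin using key
    set Z : ℕ → Set ℕ := fun n => Y n ∩ interUpTo (fun k => {x : ℕ | (n, x) ∈ A k}) (n+1)
      with hZ
    have hZF : ∀ n, Z n ∈ F := fun n =>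
      hi _ _ (hYF n) (interUpTo_mem ⟨hu, he, hi, hs⟩ _ (fun k => hA k n) (n+1))
    refine ⟨{p : ℕ × ℕ | p.2 ∈ Z p.1}, fun n => hZF n, fun k => ?_⟩
    have hsub : {p : ℕ × ℕ | p.2 ∈ Z p.1} \ A k ⊆
        ⋃ n ∈ Finset.range k, (fun x => (n, x)) '' (Y n \ {x : ℕ | (n, x) ∈ A k}) := by
      rintro ⟨n, x⟩ ⟨hx, hnA⟩
      have hxZ : x ∈ Z n := hx
      have hnk : n < k := by
        by_contra h
        push_neg at h
        exact hnA (interUpTo_subset _ (Nat.lt_succ_of_le h) hxZ.2)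
      simp only [Set.mem_iUnion, Finset.mem_range]
      exact ⟨n, hnk, x, ⟨hxZ.1, hnA⟩, rfl⟩
    refine Set.Finite.subset ?_ hsub
    apply Set.Finite.biUnion (Finset.finite_toSet _)
    intro n _
    exact ((hYfin n k).image _)
end

section
/- Let F be a filter on ω. Then F is non-meager (as a subset of 2^ω) if and only if for every partition {Jₙ : n < ω} of ω into finite sets, there exists X ∈ F such that the set {n < ω : X ∩ Jₙ = ∅} is infinite. -/
open Set

/-! Both directions rest on the interval-partition description of meagre subsets of `2^ω`.
If every `X ∈ F` misses only finitely many blocks `Jₙ`, then `F` lies in the union over `m` of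
the closed sets "meets every `Jₙ` with `n ≥ m`", each nowhere dense because a finite prefix meets
only finitely many blocks. Conversely, for a meagre `M` there are an interval partition and
patterns on its blocks such that every point copying the pattern on infinitely many blocks avoids
`M` (Talagrand). If `X ∈ F` misses infinitely many of these blocks, filling them with the
patterns gives a superset of `X`, hence a member of `F`, outside `M`. -/

open Function PiNat Topology

section Cylinders

variable {A : Type*} [TopologicalSpace A] [DiscreteTopology A]

theorem exists_cylinder_subset_of_isOpen {U : Set (ℕ → A)} (hU : IsOpen U) {y : ℕ → A}
    (hy : y ∈ U) : ∃ m, cylinder y m ⊆ U := by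
  obtain ⟨_, ⟨x, m, rfl⟩, hyx, hxU⟩ :=
    (isTopologicalBasis_cylinders fun _ => A).exists_subset_of_mem_open hy hU
  exact ⟨m, (mem_cylinder_iff_eq.1 hyx).symm ▸ hxU⟩

theorem Dense.exists_block_forcing_of_finite [Nonempty A] {U : Set (ℕ → A)} (hU : IsOpen U)
    (hd : Dense U) (m : ℕ) {S : Set (ℕ → A)} (hS : S.Finite) :
    ∃ m', ∃ p : ℕ → A, ∀ s ∈ S, ∀ z ∈ cylinder s m, EqOn z p (Ico m m') → z ∈ U := by
  induction S, hS using Set.Finite.induction_on with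
  | empty => exact ⟨m, Classical.arbitrary _, by simp⟩
  | @insert s S _ _ ih =>
    obtain ⟨m₀, p₀, hp₀⟩ := ih
    -- a point of `U` near `w` extends the pattern `p₀` so that the prefix `s` is forced as well
    let w : ℕ → A := fun a => if a < m then s a else p₀ a
    obtain ⟨y, hyw, hyU⟩ := hd.inter_open_nonempty (cylinder w (max m m₀))
      (isOpen_cylinder _ _ _) ⟨w, self_mem_cylinder _ _⟩
    obtain ⟨m₁, hm₁⟩ := exists_cylinder_subset_of_isOpen hU hyU
    refine ⟨max m₀ m₁, y, ?_⟩
    rintro s' (rfl | hs') z hz hzy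
    · refine hm₁ fun a ha => ?_
      rcases lt_or_ge a m with ham | ham
      · rw [hz a ham, hyw a (lt_max_of_lt_left ham)]
        simp [w, ham]
      · exact hzy ⟨ham, lt_max_of_lt_right ha⟩
    · refine hp₀ s' hs' z hz fun a ⟨ham, ha⟩ => ?_
      rw [hzy ⟨ham, lt_max_of_lt_left ha⟩, hyw a (lt_max_of_lt_right ha)]
      simp [w, not_lt.2 ham]

theorem Dense.exists_block_forcing [Finite A] [Nonempty A] {U : Set (ℕ → A)} (hU : IsOpen U)
    (hd : Dense U) (m : ℕ) : ∃ m' > m, ∃ p : ℕ → A, ∀ z, EqOn z p (Ico m m') → z ∈ U := by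
  obtain ⟨c⟩ := ‹Nonempty A›
  let extend : (Fin m → A) → ℕ → A := fun σ a => if h : a < m then σ ⟨a, h⟩ else c
  obtain ⟨m', p, hp⟩ := hd.exists_block_forcing_of_finite hU m (finite_range extend)
  refine ⟨max m' (m + 1), by omega, p, fun z hz => hp _ ⟨fun i => z i, rfl⟩ z ?_ ?_⟩
  · intro a ha
    simp [extend, ha]
  · exact hz.mono (Ico_subset_Ico_right (le_max_left _ _))

theorem IsMeagre.exists_forcing_blocks [Finite A] [Nonempty A] {M : Set (ℕ → A)}
    (hM : IsMeagre M) : ∃ n : ℕ → ℕ, StrictMono n ∧ n 0 = 0 ∧ ∃ p : ℕ → ℕ → A,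
      ∀ y, {k | EqOn y (p k) (Ico (n k) (n (k + 1)))}.Infinite → y ∉ M := by
  obtain ⟨t, htM, htG, htd⟩ := mem_residual.1 hM
  obtain ⟨f, hfo, rfl⟩ := htG.eq_iInter_nat
  have hV : ∀ k, IsOpen (⋂ i ∈ Iic k, f i) ∧ Dense (⋂ i ∈ Iic k, f i) := fun k =>
    ⟨(finite_Iic k).isOpen_biInter fun i _ => hfo i,
      htd.mono fun y hy => mem_iInter₂.2 fun i _ => mem_iInter.1 hy i⟩
  choose N hN p hp using fun k => (hV k).2.exists_block_forcing (hV k).1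
  let n : ℕ → ℕ := fun k => Nat.rec 0 (fun k nk => N k nk) k
  refine ⟨n, strictMono_nat_of_lt_succ fun k => hN k (n k), rfl, fun k => p k (n k),
    fun y hy hyM => htM (mem_iInter.2 fun i => ?_) hyM⟩
  obtain ⟨k, hk, hik⟩ := hy.exists_gt i
  exact mem_iInter₂.1 (hp k (n k) y hk) i hik.le

end Cylinders

theorem Pairwise.finite_setOf_inter_nonempty {ι α : Type*} {J : ι → Set α}
    (hJ : Pairwise (Disjoint on J)) {s : Set α} (hs : s.Finite) :
    {i | (J i ∩ s).Nonempty}.Finite := by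
  have hsub : ∀ a, {i | a ∈ J i}.Subsingleton := fun a i hi j hj =>
    hJ.eq (not_disjoint_iff.2 ⟨a, hi, hj⟩)
  exact (hs.biUnion fun a _ => (hsub a).finite).subset
    fun i ⟨a, hai, has⟩ => mem_biUnion has hai

theorem exists_superset_eqOn_of_pairwise_disjoint {ι α : Type*} {J : ι → Set α}
    (hJ : Pairwise (Disjoint on J)) (X : Set α) (p : ι → α → Bool) :
    ∃ y : α → Bool, X ⊆ toSet y ∧ ∀ k, X ∩ J k = ∅ → EqOn y (p k) (J k) := by
  classical
  refine ⟨fun a => decide (a ∈ X ∨ ∃ j, X ∩ J j = ∅ ∧ a ∈ J j ∧ p j a = true),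
    fun a ha => by simp [toSet, ha], fun k hk a ha => ?_⟩
  have haX : a ∉ X := fun h => hk.subset ⟨h, ha⟩
  rw [Bool.eq_iff_iff, decide_eq_true_iff]
  constructor
  · rintro (h | ⟨j, -, hj, hpj⟩)
    · exact absurd h haX
    · rwa [← hJ.eq (not_disjoint_iff.2 ⟨a, hj, ha⟩)]
  · exact fun h => Or.inr ⟨k, hk, ha, h⟩

theorem isMeagre_setOf_finite_inter_eq_empty {J : ℕ → Set ℕ} (hJf : ∀ n, (J n).Finite)
    (hJ : Pairwise (Disjoint on J)) :
    IsMeagre {x : ℕ → Bool | {n | toSet x ∩ J n = ∅}.Finite} := by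
  let E : ℕ → Set (ℕ → Bool) := fun m => ⋂ n ≥ m, ⋃ a ∈ J n, {x | x a = true}
  have hE : ∀ m, IsNowhereDense (E m) := by
    intro m
    have hEc : IsClosed (E m) := isClosed_biInter fun n _ =>
      (hJf n).isClosed_biUnion fun a _ => isClosed_eq (continuous_apply a) continuous_const
    rw [hEc.isNowhereDense_iff, eq_empty_iff_forall_notMem]
    intro y hy
    obtain ⟨m₀, hm₀⟩ := exists_cylinder_subset_of_isOpen isOpen_interior hy
    let z : ℕ → Bool := fun a => if a < m₀ then y a else false
    have hzE : z ∈ E m := interior_subset (hm₀ fun a ha => if_pos ha)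
    obtain ⟨n, hn, hmn⟩ :=
      (hJ.finite_setOf_inter_nonempty (finite_Iio m₀)).infinite_compl.exists_gt m
    obtain ⟨a, haJ, hza⟩ := mem_iUnion₂.1 (mem_iInter₂.1 hzE n hmn.le)
    have ham : a < m₀ := by
      by_contra h
      simp [z, h] at hza
    exact hn ⟨a, haJ, ham⟩
  refine (isMeagre_iUnion fun m => (hE m).isMeagre).mono fun x hx => ?_
  obtain ⟨b, hb⟩ := hx.bddAbove
  refine mem_iUnion.2 ⟨b + 1, mem_iInter₂.2 fun n hn => mem_iUnion₂.2 ?_⟩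
  by_contra! h
  exact absurd (hb (eq_empty_iff_forall_notMem.2 fun a ha => h a ha.2 ha.1)) (by omega)

theorem StrictMono.iUnion_Ico_eq_univ {n : ℕ → ℕ} (hn : StrictMono n) (hn0 : n 0 = 0) :
    ⋃ k, Ico (n k) (n (k + 1)) = univ := by
  simpa [hn0] using iUnion_Ico_map_succ_eq_Ici (fun k => hn.monotone (Nat.zero_le k))
    hn.not_bddAbove_range_of_wellFoundedLT

theorem stmt10_general (F : Set (Set ℕ)) (hF : IsFilterOn F) :
    NonMeagerFamily F ↔
      ∀ J : ℕ → Set ℕ, (∀ n, (J n).Finite) →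
        (Pairwise fun m n => Disjoint (J m) (J n)) → (⋃ n, J n) = Set.univ →
        ∃ X ∈ F, {n : ℕ | X ∩ J n = ∅}.Infinite := by
  constructor
  · intro hNM J hJf hJ _
    by_contra! hmiss
    exact hNM ((isMeagre_setOf_finite_inter_eq_empty hJf hJ).mono fun x hx => hmiss (toSet x) hx)
  · intro h hM
    obtain ⟨n, hn, hn0, p, hp⟩ := hM.exists_forcing_blocks
    have hJ := hn.monotone.pairwise_disjoint_on_Ico_succ
    obtain ⟨X, hXF, hXmiss⟩ := h _ (fun _ => finite_Ico _ _) hJ (hn.iUnion_Ico_eq_univ hn0)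
    obtain ⟨y, hXy, hy⟩ := exists_superset_eqOn_of_pairwise_disjoint hJ X p
    exact hp y (hXmiss.mono hy) (hF.2.2.2 X _ hXF hXy)

/-- A filter `F` on `ω` (extending the Fréchet filter) is non-meager iff for every
partition of `ω` into finite sets `{Jₙ}` there is `X ∈ F` meeting only finitely many...
rather: with `{n : X ∩ Jₙ = ∅}` infinite. -/
theorem stmt10 (F : Set (Set ℕ)) (hF : IsFilterOn F) (hFr : ExtendsFrechet F) :
    NonMeagerFamily F ↔
      ∀ J : ℕ → Set ℕ, (∀ n, (J n).Finite) →
        (Pairwise fun m n => Disjoint (J m) (J n)) → (⋃ n, J n) = Set.univ →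
        ∃ X ∈ F, {n : ℕ | X ∩ J n = ∅}.Infinite :=
  stmt10_general F hF
end
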